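/- arXiv:1907.11873 — 7 statements merged into one kernel-verified Lean document; each statement's English description precedes it below -/
import Mathlib

section
/- Let d ≥ 1, let φ : ℝ^d → ℝ be a C¹ function with compact support, let ψ : ℝ^d → ℝ be a C² function, let η : ℝ → [0,∞) be a C¹ function with η′ > 0 everywhere, and let 0 < γ < 1. Then ∫_{ℝ^d} φ(x)² [ η(ψ(x)) Δψ(x) + (1−γ) η′(ψ(x)) |∇ψ(x)|² ] dx ≤ (1/γ) ∫_{ℝ^d} ( η(ψ(x))² / η′(ψ(x)) ) |∇φ(x)|² dx, where Δ denotes the Euclidean Laplacian and ∇ the Euclidean gradient. -/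
/-!
With `G = φ² η(ψ)`, integration by parts gives `∫ G Δψ = -∫ ⟪∇G, ∇ψ⟫`, and
`∇G = φ² η'(ψ) ∇ψ + 2 φ η(ψ) ∇φ`. The left-hand side therefore equals
`∫ -γ η'(ψ) |φ ∇ψ|² - 2 η(ψ) ⟪∇φ, φ ∇ψ⟫`, and Young's inequality
`-2⟪u, v⟫ ≤ c |u|² + |v|² / c` with `u = φ ∇ψ`, `v = η(ψ) ∇φ`, `c = γ η'(ψ)` bounds this integrand
pointwise by `η(ψ)² / (γ η'(ψ)) |∇φ|²`.
-/

open MeasureTheory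

noncomputable def euclideanLaplacian {d : ℕ} (f : EuclideanSpace ℝ (Fin d) → ℝ)
    (x : EuclideanSpace ℝ (Fin d)) : ℝ :=
  ∑ i : Fin d, iteratedFDeriv ℝ 2 f x (fun _ => EuclideanSpace.single i 1)

open InnerProductSpace
open scoped RealInnerProductSpace Gradient

theorem iteratedFDeriv_two_apply_eq_fderiv_fderiv_apply {𝕜 E F : Type*}
    [NontriviallyNormedField 𝕜] [NormedAddCommGroup E] [NormedSpace 𝕜 E]
    [NormedAddCommGroup F] [NormedSpace 𝕜 F] {f : E → F} {x : E}
    (hf : DifferentiableAt 𝕜 (fderiv 𝕜 f) x) (m : Fin 2 → E) :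
    iteratedFDeriv 𝕜 2 f x m = fderiv 𝕜 (fun y => fderiv 𝕜 f y (m 1)) x (m 0) := by
  rw [iteratedFDeriv_two_apply, fderiv_clm_apply hf (differentiableAt_const _)]
  simp

section InnerProductSpace

variable {F : Type*} [NormedAddCommGroup F] [InnerProductSpace ℝ F]

theorem neg_two_mul_inner_le (u v : F) {c : ℝ} (hc : 0 < c) :
    -(2 * ⟪u, v⟫) ≤ c * ‖u‖ ^ 2 + ‖v‖ ^ 2 / c := by
  have expand : ‖c • u + v‖ ^ 2 / c = c * ‖u‖ ^ 2 + 2 * ⟪u, v⟫ + ‖v‖ ^ 2 / c := by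
    rw [norm_add_sq_real, norm_smul, real_inner_smul_left, Real.norm_of_nonneg hc.le]
    field_simp
  linarith [expand ▸ (by positivity : 0 ≤ ‖c • u + v‖ ^ 2 / c)]

theorem sq_mul_norm_sq_sub_inner_le (a b : F) {p h h' γ : ℝ} (hh' : 0 < h') (hγ : 0 < γ) :
    p ^ 2 * ((1 - γ) * h' * ‖a‖ ^ 2) - (p ^ 2 * h' * ‖a‖ ^ 2 + 2 * p * h * ⟪b, a⟫)
      ≤ 1 / γ * (h ^ 2 / h' * ‖b‖ ^ 2) := by
  have young := neg_two_mul_inner_le (p • a) (h • b) (mul_pos hγ hh')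
  rw [norm_smul, norm_smul, real_inner_smul_left, real_inner_smul_right, mul_pow, mul_pow,
    Real.norm_eq_abs, Real.norm_eq_abs, sq_abs, sq_abs, real_inner_comm] at young
  calc _ = -(γ * h') * (p ^ 2 * ‖a‖ ^ 2) - 2 * p * h * ⟪b, a⟫ := by ring
    _ ≤ h ^ 2 * ‖b‖ ^ 2 / (γ * h') := by nlinarith
    _ = _ := by field_simp

variable [CompleteSpace F]

theorem ContDiff.continuous_gradient {f : F → ℝ} {n : WithTop ℕ∞} (hf : ContDiff ℝ n f)
    (hn : n ≠ 0) : Continuous (∇ f) :=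
  (toDual ℝ F).symm.continuous.comp (hf.continuous_fderiv hn)

theorem gradient_of_notMem_tsupport {f : F → ℝ} {x : F} (hx : x ∉ tsupport f) : ∇ f x = 0 := by
  simp [gradient, fderiv_of_notMem_tsupport ℝ hx]

theorem HasCompactSupport.integrable_of_eq_zero_of_gradient_eq_zero [MeasurableSpace F]
    [BorelSpace F] {μ : Measure F} [IsFiniteMeasureOnCompacts μ] {φ u : F → ℝ}
    (hφ : HasCompactSupport φ) (hu : Continuous u) (hu0 : ∀ x, φ x = 0 → ∇ φ x = 0 → u x = 0) :
    Integrable u μ :=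
  hu.integrable_of_hasCompactSupport <| HasCompactSupport.intro hφ fun _ hx =>
    hu0 _ (image_eq_zero_of_notMem_tsupport hx) (gradient_of_notMem_tsupport hx)

theorem hasGradientAt_sq_mul_comp {φ ψ : F → ℝ} {η : ℝ → ℝ} {x : F}
    (hφ : DifferentiableAt ℝ φ x) (hψ : DifferentiableAt ℝ ψ x)
    (hη : DifferentiableAt ℝ η (ψ x)) :
    HasGradientAt (fun y => φ y ^ 2 * η (ψ y))
      ((φ x ^ 2 * deriv η (ψ x)) • ∇ ψ x + (2 * φ x * η (ψ x)) • ∇ φ x) x := by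
  rw [hasGradientAt_iff_hasFDerivAt]
  refine ((hφ.hasFDerivAt.pow 2).fun_mul
    (hη.hasDerivAt.comp_hasFDerivAt x hψ.hasFDerivAt)).congr_fderiv ?_
  ext v
  simp only [Function.comp_apply, Nat.add_one_sub_one, pow_one, nsmul_eq_mul, Nat.cast_ofNat,
    add_apply, smul_apply, smul_eq_mul, map_add, map_smul, toDual_gradient]
  ring

end InnerProductSpace

section Euclidean

variable {d : ℕ}

noncomputable def partialDeriv (i : Fin d) (f : EuclideanSpace ℝ (Fin d) → ℝ)
    (x : EuclideanSpace ℝ (Fin d)) : ℝ :=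
  fderiv ℝ f x (EuclideanSpace.single i 1)

theorem gradient_apply_eq_partialDeriv (f : EuclideanSpace ℝ (Fin d) → ℝ)
    (x : EuclideanSpace ℝ (Fin d)) (i : Fin d) : ∇ f x i = partialDeriv i f x := by
  rw [partialDeriv, ← inner_gradient_left, EuclideanSpace.inner_single_right]
  simp

theorem inner_gradient_eq_sum_partialDeriv (f g : EuclideanSpace ℝ (Fin d) → ℝ)
    (x : EuclideanSpace ℝ (Fin d)) :
    ⟪∇ f x, ∇ g x⟫ = ∑ i, partialDeriv i f x * partialDeriv i g x := by
  simp only [PiLp.inner_apply, gradient_apply_eq_partialDeriv, RCLike.inner_apply, conj_trivial,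
    mul_comm]

theorem ContDiff.contDiff_partialDeriv {f : EuclideanSpace ℝ (Fin d) → ℝ} {n m : WithTop ℕ∞}
    (hf : ContDiff ℝ n f) (hmn : m + 1 ≤ n) (i : Fin d) : ContDiff ℝ m (partialDeriv i f) :=
  (hf.fderiv_right hmn).clm_apply contDiff_const

theorem ContDiff.continuous_partialDeriv {f : EuclideanSpace ℝ (Fin d) → ℝ} {n : WithTop ℕ∞}
    (hf : ContDiff ℝ n f) (hn : n ≠ 0) (i : Fin d) : Continuous (partialDeriv i f) :=
  (hf.continuous_fderiv hn).clm_apply continuous_const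

theorem HasCompactSupport.partialDeriv {f : EuclideanSpace ℝ (Fin d) → ℝ}
    (hf : HasCompactSupport f) (i : Fin d) : HasCompactSupport (partialDeriv i f) :=
  hf.fderiv_apply ℝ _

theorem euclideanLaplacian_eq_sum_partialDeriv {ψ : EuclideanSpace ℝ (Fin d) → ℝ}
    (hψ : ContDiff ℝ 2 ψ) (x : EuclideanSpace ℝ (Fin d)) :
    euclideanLaplacian ψ x = ∑ i, partialDeriv i (partialDeriv i ψ) x :=
  Finset.sum_congr rfl fun _ _ => iteratedFDeriv_two_apply_eq_fderiv_fderiv_apply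
    ((hψ.fderiv_right (m := 1) le_rfl).differentiable one_ne_zero x) _

theorem ContDiff.continuous_euclideanLaplacian {ψ : EuclideanSpace ℝ (Fin d) → ℝ}
    (hψ : ContDiff ℝ 2 ψ) : Continuous (euclideanLaplacian ψ) := by
  rw [funext (euclideanLaplacian_eq_sum_partialDeriv hψ)]
  exact continuous_finsetSum _ fun i _ =>
    (hψ.contDiff_partialDeriv (m := 1) le_rfl i).continuous_partialDeriv one_ne_zero i

theorem integral_mul_partialDeriv_eq_neg {f g : EuclideanSpace ℝ (Fin d) → ℝ}
    (hf : ContDiff ℝ 1 f) (hfc : HasCompactSupport f) (hg : ContDiff ℝ 1 g) (i : Fin d) :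
    ∫ x, f x * partialDeriv i g x = -∫ x, partialDeriv i f x * g x :=
  integral_mul_fderiv_eq_neg_fderiv_mul_of_integrable
    (Continuous.integrable_of_hasCompactSupport
      ((hf.continuous_partialDeriv one_ne_zero i).mul hg.continuous) (hfc.partialDeriv i).mul_right)
    (Continuous.integrable_of_hasCompactSupport
      (hf.continuous.mul (hg.continuous_partialDeriv one_ne_zero i)) hfc.mul_right)
    ((hf.continuous.mul hg.continuous).integrable_of_hasCompactSupport hfc.mul_right)
    (fun x _ => hf.differentiable one_ne_zero x) (fun x _ => hg.differentiable one_ne_zero x)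

theorem integral_mul_euclideanLaplacian_eq_neg_integral_inner_gradient
    {f ψ : EuclideanSpace ℝ (Fin d) → ℝ} (hf : ContDiff ℝ 1 f) (hfc : HasCompactSupport f)
    (hψ : ContDiff ℝ 2 ψ) :
    ∫ x, f x * euclideanLaplacian ψ x = -∫ x, ⟪∇ f x, ∇ ψ x⟫ := by
  have hψ' (i : Fin d) : ContDiff ℝ 1 (partialDeriv i ψ) := hψ.contDiff_partialDeriv le_rfl i
  simp only [euclideanLaplacian_eq_sum_partialDeriv hψ, inner_gradient_eq_sum_partialDeriv,
    Finset.mul_sum]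
  rw [integral_finsetSum, integral_finsetSum, ← Finset.sum_neg_distrib]
  · exact Finset.sum_congr rfl fun i _ => integral_mul_partialDeriv_eq_neg hf hfc (hψ' i) i
  · exact fun i _ => Continuous.integrable_of_hasCompactSupport
      ((hf.continuous_partialDeriv one_ne_zero i).mul (hψ' i).continuous)
      (hfc.partialDeriv i).mul_right
  · exact fun i _ => Continuous.integrable_of_hasCompactSupport
      (hf.continuous.mul ((hψ' i).continuous_partialDeriv one_ne_zero i)) hfc.mul_right

theorem integral_sq_mul_comp_mul_euclideanLaplacian {φ ψ : EuclideanSpace ℝ (Fin d) → ℝ}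
    {η : ℝ → ℝ} (hφ : ContDiff ℝ 1 φ) (hφc : HasCompactSupport φ) (hψ : ContDiff ℝ 2 ψ)
    (hη : ContDiff ℝ 1 η) :
    ∫ x, φ x ^ 2 * η (ψ x) * euclideanLaplacian ψ x
      = -∫ x, (φ x ^ 2 * deriv η (ψ x) * ‖∇ ψ x‖ ^ 2 + 2 * φ x * η (ψ x) * ⟪∇ φ x, ∇ ψ x⟫) := by
  have hG : ContDiff ℝ 1 fun x => φ x ^ 2 * η (ψ x) :=
    (hφ.pow 2).mul (hη.comp (hψ.of_le one_le_two))
  have hGc : HasCompactSupport fun x => φ x ^ 2 * η (ψ x) := hφc.mono fun x hx => by simp_all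
  rw [integral_mul_euclideanLaplacian_eq_neg_integral_inner_gradient hG hGc hψ]
  congr 2 with x
  rw [(hasGradientAt_sq_mul_comp (hφ.differentiable one_ne_zero x)
    (hψ.differentiable two_ne_zero x) (hη.differentiable one_ne_zero _)).gradient,
    inner_add_left, real_inner_smul_left, real_inner_smul_left, real_inner_self_eq_norm_sq]

end Euclidean

theorem stmt_0_general {d : ℕ}
    (φ ψ : EuclideanSpace ℝ (Fin d) → ℝ)
    (hφ : ContDiff ℝ 1 φ) (hφc : HasCompactSupport φ)
    (hψ : ContDiff ℝ 2 ψ)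
    (η : ℝ → ℝ) (hη : ContDiff ℝ 1 η)
    (hη' : ∀ t, 0 < deriv η t)
    (γ : ℝ) (hγ0 : 0 < γ) :
    ∫ x, φ x ^ 2 * (η (ψ x) * euclideanLaplacian ψ x
        + (1 - γ) * deriv η (ψ x) * ‖gradient ψ x‖ ^ 2)
      ≤ (1 / γ) * ∫ x, (η (ψ x)) ^ 2 / deriv η (ψ x) * ‖gradient φ x‖ ^ 2 := by
  have hη'_cont : Continuous (deriv η) := hη.continuous_deriv le_rfl
  have hη_cont := hη.continuous
  have hgradφ_cont := hφ.continuous_gradient one_ne_zero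
  have hgradψ_cont := hψ.continuous_gradient two_ne_zero
  have hlap_cont := hψ.continuous_euclideanLaplacian
  have int_lap : Integrable fun x => φ x ^ 2 * η (ψ x) * euclideanLaplacian ψ x :=
    hφc.integrable_of_eq_zero_of_gradient_eq_zero (by fun_prop) fun x hx _ => by simp [hx]
  have int_grad : Integrable fun x => φ x ^ 2 * ((1 - γ) * deriv η (ψ x) * ‖∇ ψ x‖ ^ 2) :=
    hφc.integrable_of_eq_zero_of_gradient_eq_zero (by fun_prop) fun x hx _ => by simp [hx]
  have int_ibp : Integrable fun x =>
      φ x ^ 2 * deriv η (ψ x) * ‖∇ ψ x‖ ^ 2 + 2 * φ x * η (ψ x) * ⟪∇ φ x, ∇ ψ x⟫ :=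
    hφc.integrable_of_eq_zero_of_gradient_eq_zero (by fun_prop) fun x hx _ => by simp [hx]
  have int_rhs : Integrable fun x => η (ψ x) ^ 2 / deriv η (ψ x) * ‖∇ φ x‖ ^ 2 :=
    hφc.integrable_of_eq_zero_of_gradient_eq_zero
      (by fun_prop (disch := exact fun x => (hη' _).ne')) fun x _ hx => by simp [hx]
  calc _ = ∫ x, φ x ^ 2 * η (ψ x) * euclideanLaplacian ψ x
        + φ x ^ 2 * ((1 - γ) * deriv η (ψ x) * ‖∇ ψ x‖ ^ 2) := by
        congr 1 with x; ring
    _ = ∫ x, φ x ^ 2 * ((1 - γ) * deriv η (ψ x) * ‖∇ ψ x‖ ^ 2)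
        - (φ x ^ 2 * deriv η (ψ x) * ‖∇ ψ x‖ ^ 2 + 2 * φ x * η (ψ x) * ⟪∇ φ x, ∇ ψ x⟫) := by
        rw [integral_add int_lap int_grad, integral_sub int_grad int_ibp,
          integral_sq_mul_comp_mul_euclideanLaplacian hφ hφc hψ hη]
        ring
    _ ≤ ∫ x, 1 / γ * (η (ψ x) ^ 2 / deriv η (ψ x) * ‖∇ φ x‖ ^ 2) :=
        integral_mono (int_grad.sub int_ibp) (int_rhs.const_mul _) fun x =>
          sq_mul_norm_sq_sub_inner_le (∇ ψ x) (∇ φ x) (hη' (ψ x)) hγ0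
    _ = _ := integral_const_mul _ _

/-- Proposition 2.2 (first inequality), Euclidean case: for `φ` a `C¹` function with compact
support, `ψ` a `C²` function, `η : ℝ → [0,∞)` a `C¹` function with `η′ > 0`, and `0 < γ < 1`,
`∫ φ² [η(ψ)Δψ + (1−γ)η′(ψ)|∇ψ|²] ≤ (1/γ) ∫ (η(ψ)²/η′(ψ)) |∇φ|²`. -/
theorem stmt_0 {d : ℕ} (hd : 1 ≤ d)
    (φ ψ : EuclideanSpace ℝ (Fin d) → ℝ)
    (hφ : ContDiff ℝ 1 φ) (hφc : HasCompactSupport φ)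
    (hψ : ContDiff ℝ 2 ψ)
    (η : ℝ → ℝ) (hη : ContDiff ℝ 1 η) (hη0 : ∀ t, 0 ≤ η t)
    (hη' : ∀ t, 0 < deriv η t)
    (γ : ℝ) (hγ0 : 0 < γ) (hγ1 : γ < 1) :
    ∫ x, φ x ^ 2 * (η (ψ x) * euclideanLaplacian ψ x
        + (1 - γ) * deriv η (ψ x) * ‖gradient ψ x‖ ^ 2)
      ≤ (1 / γ) * ∫ x, (η (ψ x)) ^ 2 / deriv η (ψ x) * ‖gradient φ x‖ ^ 2 :=
  stmt_0_general φ ψ hφ hφc hψ η hη hη' γ hγ0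
end

section
/- Let d ≥ 1, let φ : ℝ^d → ℝ be a C¹ function with compact support, let ψ : ℝ^d → ℝ be a C² function, let η : ℝ → (0,∞) be a C¹ function with η′ > 0 everywhere, and let 0 < γ < 1. Then ∫_{ℝ^d} φ(x)² [ Δψ(x)/η(−ψ(x)) + (1−γ) ( η′(−ψ(x)) / η(−ψ(x))² ) |∇ψ(x)|² ] dx ≤ (1/γ) ∫_{ℝ^d} |∇φ(x)|² / η′(−ψ(x)) dx, where Δ denotes the Euclidean Laplacian and ∇ the Euclidean gradient. -/
/-!
Put `c = φ² / η(-ψ)`. Integrating by parts against the compactly supported `c` gives Green's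
identity `∫ c Δψ = -∫ ⟪∇c, ∇ψ⟫`, and `∇c = (2φ/η) ∇φ + φ² (η'/η²) ∇ψ`. Hence the left-hand side
equals `∫ -2 (φ/η) ⟪∇φ, ∇ψ⟫ - γ η' (φ/η)² ‖∇ψ‖²`, whose integrand is bounded pointwise by
`‖∇φ‖² / (γ η')` by the weighted Young inequality `-2a⟪u, w⟫ ≤ t a² ‖w‖² + ‖u‖² / t`
with `t = γ η'(-ψ)`.
-/

open MeasureTheory

open InnerProductSpace Laplacian
open scoped RealInnerProductSpace

section InnerProductSpace

variable {E : Type*} [NormedAddCommGroup E] [InnerProductSpace ℝ E]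

theorem neg_two_mul_mul_inner_le (a : ℝ) {t : ℝ} (ht : 0 < t) (u w : E) :
    -(2 * a * ⟪u, w⟫) ≤ t * a ^ 2 * ‖w‖ ^ 2 + ‖u‖ ^ 2 / t := by
  have key : 0 ≤ ‖(t * a) • w + u‖ ^ 2 / t := by positivity
  rw [norm_add_sq_real, norm_smul, real_inner_smul_left, real_inner_comm, Real.norm_eq_abs,
    mul_pow, sq_abs] at key
  have : ((t * a) ^ 2 * ‖w‖ ^ 2 + 2 * (t * a * ⟪u, w⟫) + ‖u‖ ^ 2) / t
      = t * a ^ 2 * ‖w‖ ^ 2 + 2 * a * ⟪u, w⟫ + ‖u‖ ^ 2 / t := by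
    field_simp
  linarith

theorem sq_mul_div_add_le {p L A B γ : ℝ} (u w : E) (hA : 0 < A) (hB : 0 < B) (hγ : 0 < γ) :
    p ^ 2 * (L / A + (1 - γ) * (B / A ^ 2) * ‖w‖ ^ 2)
      ≤ p ^ 2 / A * L + (2 * (p / A) * ⟪u, w⟫ + B * (p / A) ^ 2 * ‖w‖ ^ 2)
        + 1 / γ * (‖u‖ ^ 2 / B) := by
  have hsplit : p ^ 2 * (L / A + (1 - γ) * (B / A ^ 2) * ‖w‖ ^ 2)
      = p ^ 2 / A * L + (2 * (p / A) * ⟪u, w⟫ + B * (p / A) ^ 2 * ‖w‖ ^ 2)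
        + (-(2 * (p / A) * ⟪u, w⟫) - γ * B * (p / A) ^ 2 * ‖w‖ ^ 2) := by
    field_simp
    ring
  have hscale : ‖u‖ ^ 2 / (γ * B) = 1 / γ * (‖u‖ ^ 2 / B) := by
    field_simp
  linarith [neg_two_mul_mul_inner_le (p / A) (mul_pos hγ hB) u w]

theorem ContDiff.continuous_gradient_s1 [CompleteSpace E] {f : E → ℝ} (hf : ContDiff ℝ 1 f) :
    Continuous (gradient f) :=
  (toDual ℝ E).symm.continuous.comp (hf.continuous_fderiv one_ne_zero)

theorem HasCompactSupport.gradient [CompleteSpace E] {f : E → ℝ} (hf : HasCompactSupport f) :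
    HasCompactSupport (gradient f) :=
  (hf.fderiv ℝ).comp_left (g := (toDual ℝ E).symm) (map_zero _)

theorem hasGradientAt_sq_div_comp_neg [CompleteSpace E] {φ ψ : E → ℝ} {η : ℝ → ℝ} {x : E}
    (hφ : DifferentiableAt ℝ φ x) (hψ : DifferentiableAt ℝ ψ x)
    (hη : DifferentiableAt ℝ η (-ψ x)) (hη0 : η (-ψ x) ≠ 0) :
    HasGradientAt (fun y => φ y ^ 2 / η (-ψ y))
      ((2 * φ x / η (-ψ x)) • gradient φ x
        + (φ x ^ 2 * (deriv η (-ψ x) / η (-ψ x) ^ 2)) • gradient ψ x) x := by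
  rw [hasGradientAt_iff_hasFDerivAt]
  have h : HasFDerivAt (fun y => φ y ^ 2 * (η (-ψ y))⁻¹) _ x :=
    (hφ.hasFDerivAt.pow 2).mul ((hasDerivAt_inv hη0).comp_hasFDerivAt x
      (hη.hasDerivAt.comp_hasFDerivAt x hψ.hasFDerivAt.neg))
  simp only [div_eq_mul_inv]
  refine h.congr_fderiv ?_
  ext v
  simp only [smul_neg, neg_smul, neg_neg, Nat.add_one_sub_one, pow_one, nsmul_eq_mul,
    Nat.cast_ofNat, add_apply, smul_apply, smul_eq_mul,
    map_add, map_smul, toDual_gradient]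
  field_simp
  ring

variable [FiniteDimensional ℝ E]

theorem ContDiff.continuous_laplacian {ψ : E → ℝ} (hψ : ContDiff ℝ 2 ψ) : Continuous (Δ ψ) := by
  rw [laplacian_eq_iteratedFDeriv_orthonormalBasis ψ (stdOrthonormalBasis ℝ E)]
  have := hψ.continuous_iteratedFDeriv (m := 2) le_rfl
  fun_prop

theorem laplacian_eq_sum_fderiv_fderiv_apply {ψ : E → ℝ} {ι : Type*} [Fintype ι]
    (b : OrthonormalBasis ι ℝ E) (hψ : ContDiff ℝ 2 ψ) (x : E) :
    Δ ψ x = ∑ i, fderiv ℝ (fun y => fderiv ℝ ψ y (b i)) x (b i) := by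
  have hψ' : Differentiable ℝ (fderiv ℝ ψ) :=
    (hψ.fderiv_right (m := 1) le_rfl).differentiable one_ne_zero
  simp [laplacian_eq_iteratedFDeriv_orthonormalBasis ψ b, iteratedFDeriv_two_apply,
    fderiv_clm_apply (hψ' x) (differentiableAt_const _)]

variable [MeasurableSpace E] [BorelSpace E] (μ : Measure E) [μ.IsAddHaarMeasure]

theorem integral_mul_laplacian_eq_neg_integral_inner_gradient {c ψ : E → ℝ}
    (hc : ContDiff ℝ 1 c) (hcc : HasCompactSupport c) (hψ : ContDiff ℝ 2 ψ) :
    ∫ x, c x * Δ ψ x ∂μ = -∫ x, ⟪gradient c x, gradient ψ x⟫ ∂μ := by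
  set b := stdOrthonormalBasis ℝ E
  have hpartial : ∀ v, ContDiff ℝ 1 (fun y => fderiv ℝ ψ y v) := fun v =>
    (hψ.fderiv_right (m := 1) le_rfl).clm_apply contDiff_const
  have hderiv_apply : ∀ {f : E → ℝ} (v : E), ContDiff ℝ 1 f →
      Continuous (fun x => fderiv ℝ f x v) := fun v hf =>
    (hf.continuous_fderiv_apply one_ne_zero).comp (continuous_id.prodMk continuous_const)
  have hint_left : ∀ i,
      Integrable (fun x => c x * fderiv ℝ (fun y => fderiv ℝ ψ y (b i)) x (b i)) μ := fun i =>
    (hc.continuous.mul (hderiv_apply _ (hpartial _))).integrable_of_hasCompactSupport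
      hcc.mul_right
  have hint_right : ∀ i, Integrable (fun x => fderiv ℝ c x (b i) * fderiv ℝ ψ x (b i)) μ :=
    fun i => ((hderiv_apply _ hc).mul (hpartial _).continuous).integrable_of_hasCompactSupport
      (hcc.fderiv_apply ℝ (b i)).mul_right
  have hparts : ∀ i, ∫ x, c x * fderiv ℝ (fun y => fderiv ℝ ψ y (b i)) x (b i) ∂μ
      = -∫ x, fderiv ℝ c x (b i) * fderiv ℝ ψ x (b i) ∂μ := fun i =>
    integral_mul_fderiv_eq_neg_fderiv_mul_of_integrable (hint_right i) (hint_left i)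
      ((hc.continuous.mul (hpartial _).continuous).integrable_of_hasCompactSupport hcc.mul_right)
      (fun x _ => hc.differentiable one_ne_zero x)
      (fun x _ => (hpartial _).differentiable one_ne_zero x)
  have hinner : ∀ x,
      ⟪gradient c x, gradient ψ x⟫ = ∑ i, fderiv ℝ c x (b i) * fderiv ℝ ψ x (b i) := by
    intro x
    rw [← b.sum_inner_mul_inner]
    simp only [real_inner_comm (gradient ψ x), inner_gradient_left]
  simp only [laplacian_eq_sum_fderiv_fderiv_apply b hψ, Finset.mul_sum, hinner]
  rw [integral_finsetSum _ fun i _ => hint_left i, integral_finsetSum _ fun i _ => hint_right i,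
    ← Finset.sum_neg_distrib]
  exact Finset.sum_congr rfl fun i _ => hparts i

theorem integral_sq_div_comp_neg_mul_laplacian {φ ψ : E → ℝ} {η : ℝ → ℝ}
    (hφ : ContDiff ℝ 1 φ) (hφc : HasCompactSupport φ) (hψ : ContDiff ℝ 2 ψ)
    (hη : ContDiff ℝ 1 η) (hη0 : ∀ t, η t ≠ 0) :
    ∫ x, φ x ^ 2 / η (-ψ x) * Δ ψ x ∂μ
      = -∫ x, (2 * (φ x / η (-ψ x)) * ⟪gradient φ x, gradient ψ x⟫
          + deriv η (-ψ x) * (φ x / η (-ψ x)) ^ 2 * ‖gradient ψ x‖ ^ 2) ∂μ := by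
  have hψ1 : ContDiff ℝ 1 ψ := hψ.of_le one_le_two
  have hc : ContDiff ℝ 1 (fun y => φ y ^ 2 / η (-ψ y)) :=
    (hφ.pow 2).div (hη.comp hψ1.neg) fun _ => hη0 _
  have hcc : HasCompactSupport (fun y => φ y ^ 2 / η (-ψ y)) :=
    hφc.mono fun x hx h => hx (by simp [h])
  rw [integral_mul_laplacian_eq_neg_integral_inner_gradient μ hc hcc hψ]
  congr 2 with x
  rw [(hasGradientAt_sq_div_comp_neg (hφ.differentiable one_ne_zero x)
    (hψ1.differentiable one_ne_zero x) (hη.differentiable one_ne_zero _) (hη0 _)).gradient,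
    inner_add_left, real_inner_smul_left, real_inner_smul_left, real_inner_self_eq_norm_sq]
  field_simp [hη0]

theorem integral_sq_mul_laplacian_div_comp_neg_le {φ ψ : E → ℝ} {η : ℝ → ℝ} {γ : ℝ}
    (hφ : ContDiff ℝ 1 φ) (hφc : HasCompactSupport φ) (hψ : ContDiff ℝ 2 ψ)
    (hη : ContDiff ℝ 1 η) (hη0 : ∀ t, 0 < η t) (hη' : ∀ t, 0 < deriv η t) (hγ : 0 < γ) :
    ∫ x, φ x ^ 2 * (Δ ψ x / η (-ψ x)
        + (1 - γ) * (deriv η (-ψ x) / η (-ψ x) ^ 2) * ‖gradient ψ x‖ ^ 2) ∂μ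
      ≤ (1 / γ) * ∫ x, ‖gradient φ x‖ ^ 2 / deriv η (-ψ x) ∂μ := by
  have hψ1 : ContDiff ℝ 1 ψ := hψ.of_le one_le_two
  have hη0' : ∀ t, η t ≠ 0 := fun t => (hη0 t).ne'
  set G := fun x => 2 * (φ x / η (-ψ x)) * ⟪gradient φ x, gradient ψ x⟫
    + deriv η (-ψ x) * (φ x / η (-ψ x)) ^ 2 * ‖gradient ψ x‖ ^ 2
  set R := fun x => ‖gradient φ x‖ ^ 2 / deriv η (-ψ x)
  have hint : ∀ f : E → ℝ, Continuous f → (∀ x, φ x = 0 → f x = 0) → Integrable f μ :=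
    fun f hf h0 => hf.integrable_of_hasCompactSupport (hφc.mono fun x hx hφx => hx (h0 x hφx))
  have := hφ.continuous_gradient_s1
  have := hψ1.continuous_gradient_s1
  have := hψ.continuous_laplacian
  have := hη.continuous_deriv le_rfl
  have hint_lap : Integrable (fun x => φ x ^ 2 / η (-ψ x) * Δ ψ x) μ :=
    hint _ (by fun_prop (disch := simp [hη0'])) fun x h => by simp [h]
  have hint_G : Integrable G μ :=
    hint _ (by fun_prop (disch := simp [hη0'])) fun x h => by simp [G, h]
  have hint_lhs : Integrable (fun x => φ x ^ 2 * (Δ ψ x / η (-ψ x)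
      + (1 - γ) * (deriv η (-ψ x) / η (-ψ x) ^ 2) * ‖gradient ψ x‖ ^ 2)) μ :=
    hint _ (by fun_prop (disch := simp [hη0'])) fun x h => by simp [h]
  have hint_R : Integrable R μ :=
    Continuous.integrable_of_hasCompactSupport (by fun_prop (disch := exact fun x => (hη' _).ne'))
      (hφc.gradient.mono fun x hx h => hx (by simp [R, h]))
  have hint_D : Integrable (fun x => φ x ^ 2 / η (-ψ x) * Δ ψ x + G x) μ := hint_lap.add hint_G
  calc _ ≤ ∫ x, (φ x ^ 2 / η (-ψ x) * Δ ψ x + G x) + 1 / γ * R x ∂μ :=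
        integral_mono hint_lhs (hint_D.add (hint_R.const_mul _)) fun x =>
          sq_mul_div_add_le _ _ (hη0 _) (hη' _) hγ
    _ = 1 / γ * ∫ x, R x ∂μ := by
        rw [integral_add hint_D (hint_R.const_mul _), integral_add hint_lap hint_G,
          integral_sq_div_comp_neg_mul_laplacian μ hφ hφc hψ hη hη0', neg_add_cancel, zero_add,
          integral_const_mul]

end InnerProductSpace

theorem euclideanLaplacian_eq_laplacian {d : ℕ} (f : EuclideanSpace ℝ (Fin d) → ℝ) :
    euclideanLaplacian f = Δ f := by
  rw [laplacian_eq_iteratedFDeriv_orthonormalBasis f (EuclideanSpace.basisFun (Fin d) ℝ)]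
  ext x
  refine Finset.sum_congr rfl fun i _ => congrArg _ ?_
  ext j : 1
  fin_cases j <;> simp

theorem stmt_1_general {d : ℕ}
    (φ ψ : EuclideanSpace ℝ (Fin d) → ℝ)
    (hφ : ContDiff ℝ 1 φ) (hφc : HasCompactSupport φ)
    (hψ : ContDiff ℝ 2 ψ)
    (η : ℝ → ℝ) (hη : ContDiff ℝ 1 η) (hη0 : ∀ t, 0 < η t)
    (hη' : ∀ t, 0 < deriv η t)
    (γ : ℝ) (hγ0 : 0 < γ) :
    ∫ x, φ x ^ 2 * (euclideanLaplacian ψ x / η (-ψ x)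
        + (1 - γ) * (deriv η (-ψ x) / (η (-ψ x)) ^ 2) * ‖gradient ψ x‖ ^ 2)
      ≤ (1 / γ) * ∫ x, ‖gradient φ x‖ ^ 2 / deriv η (-ψ x) := by
  simpa only [euclideanLaplacian_eq_laplacian] using
    integral_sq_mul_laplacian_div_comp_neg_le volume hφ hφc hψ hη hη0 hη' hγ0

/-- Proposition 2.2, inequality (2.3), Euclidean case: for `φ` a `C¹` function with compact
support, `ψ` a `C²` function, `η : ℝ → (0,∞)` a `C¹` function with `η′ > 0`, and `0 < γ < 1`,
`∫ φ² [Δψ/η(−ψ) + (1−γ)(η′(−ψ)/η(−ψ)²)|∇ψ|²] ≤ (1/γ) ∫ |∇φ|²/η′(−ψ)`. -/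
theorem stmt_1 {d : ℕ} (hd : 1 ≤ d)
    (φ ψ : EuclideanSpace ℝ (Fin d) → ℝ)
    (hφ : ContDiff ℝ 1 φ) (hφc : HasCompactSupport φ)
    (hψ : ContDiff ℝ 2 ψ)
    (η : ℝ → ℝ) (hη : ContDiff ℝ 1 η) (hη0 : ∀ t, 0 < η t)
    (hη' : ∀ t, 0 < deriv η t)
    (γ : ℝ) (hγ0 : 0 < γ) (hγ1 : γ < 1) :
    ∫ x, φ x ^ 2 * (euclideanLaplacian ψ x / η (-ψ x)
        + (1 - γ) * (deriv η (-ψ x) / (η (-ψ x)) ^ 2) * ‖gradient ψ x‖ ^ 2)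
      ≤ (1 / γ) * ∫ x, ‖gradient φ x‖ ^ 2 / deriv η (-ψ x) :=
  stmt_1_general φ ψ hφ hφc hψ η hη hη0 hη' γ hγ0
end

section
/- Let E be a complex vector space, α > 0, and let q : E → [0,∞) satisfy: (i) q(x) = 0 if and only if x = 0; (ii) q(c·x) = |c|^α q(x) for all c ∈ ℂ and x ∈ E; (iii) q(x+y) ≤ q(x) + q(y) for all x, y ∈ E. Equip E with the metric d(x,y) = q(x−y). Then the following are equivalent: (1) E is finite-dimensional over ℂ; (2) every sequence in the closed ball B = {x ∈ E : q(x) ≤ 1} has a subsequence converging in the metric d; (3) every sequence in the sphere S = {x ∈ E : q(x) = 1} has a subsequence converging in the metric d. -/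
/-!
With respect to a linearly independent family `v : ι → E`, `q (∑ i, c i • v i)` is squeezed
between two multiples of `‖c‖ ^ α`: the upper bound comes from subadditivity and homogeneity,
the lower bound from the positive minimum of this continuous function on the unit sphere of
`ι → 𝕜`. So in finite dimension bounded sequences have convergent subsequences
(Bolzano–Weierstrass in coordinates), and every finite-dimensional subspace `F` contains a
nearest point `y₀` to any `x₀ ∉ F`. Rescaling `x₀ - y₀` to `q`-size one gives Riesz's lemma with
constant `1`; in infinite dimension, iterating it yields a sequence on the unit sphere whose
terms are pairwise at distance at least `1`, which has no convergent subsequence.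
-/

open Filter Topology

structure IsQuasiNorm (𝕜 : Type*) {E : Type*} [RCLike 𝕜] [AddCommGroup E] [Module 𝕜 E]
    (α : ℝ) (q : E → ℝ) : Prop where
  exponent_pos : 0 < α
  eq_zero_iff : ∀ x, q x = 0 ↔ x = 0
  map_smul : ∀ (c : 𝕜) (x : E), q (c • x) = ‖c‖ ^ α * q x
  add_le : ∀ x y, q (x + y) ≤ q x + q y

namespace IsQuasiNorm

variable {𝕜 E : Type*} [RCLike 𝕜] [AddCommGroup E] [Module 𝕜 E] {α : ℝ} {q : E → ℝ}
  (hq : IsQuasiNorm 𝕜 α q)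
include hq

lemma map_zero : q 0 = 0 := (hq.eq_zero_iff 0).2 rfl

lemma map_neg (x : E) : q (-x) = q x := by
  simpa using hq.map_smul (-1) x

lemma nonneg (x : E) : 0 ≤ q x := by
  have h := hq.add_le x (-x)
  rw [add_neg_cancel, hq.map_zero, hq.map_neg] at h
  linarith

lemma pos_of_ne_zero {x : E} (hx : x ≠ 0) : 0 < q x :=
  (hq.nonneg x).lt_of_ne fun h => hx ((hq.eq_zero_iff x).1 h.symm)

lemma sub_comm (x y : E) : q (x - y) = q (y - x) := by
  rw [← neg_sub, hq.map_neg]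

lemma sub_le_sub_add_sub (x y z : E) : q (x - z) ≤ q (x - y) + q (y - z) := by
  simpa using hq.add_le (x - y) (y - z)

lemma abs_sub_le (x y : E) : |q x - q y| ≤ q (x - y) := by
  rw [abs_sub_le_iff]
  constructor
  · simpa using hq.sub_le_sub_add_sub x y 0
  · simpa [hq.sub_comm x y] using hq.sub_le_sub_add_sub y x 0

lemma map_ofReal_smul {t : ℝ} (ht : 0 ≤ t) (x : E) : q ((t : 𝕜) • x) = t ^ α * q x := by
  rw [hq.map_smul, RCLike.norm_ofReal, abs_of_nonneg ht]

section LinearCombination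

variable {ι : Type*} [Fintype ι] (v : ι → E)

lemma map_linearCombination_le (c : ι → 𝕜) :
    q (Fintype.linearCombination 𝕜 v c) ≤ (∑ i, q (v i)) * ‖c‖ ^ α := by
  rw [Fintype.linearCombination_apply, Finset.sum_mul]
  refine (Finset.le_sum_of_subadditive q hq.map_zero.le hq.add_le _ _).trans
    (Finset.sum_le_sum fun i _ => ?_)
  rw [hq.map_smul, mul_comm]
  exact mul_le_mul_of_nonneg_left
    (Real.rpow_le_rpow (norm_nonneg _) (norm_le_pi_norm c i) hq.exponent_pos.le) (hq.nonneg _)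

lemma continuous_sub_linearCombination (x : E) :
    Continuous fun c => q (x - Fintype.linearCombination 𝕜 v c) := by
  set L := Fintype.linearCombination 𝕜 v
  rw [continuous_iff_continuousAt]
  intro c₀
  rw [ContinuousAt, tendsto_iff_dist_tendsto_zero]
  have hbound : Tendsto (fun c => (∑ i, q (v i)) * ‖c - c₀‖ ^ α) (𝓝 c₀) (𝓝 0) := by
    simpa [Real.zero_rpow hq.exponent_pos.ne'] using
      (((continuous_sub_right c₀).norm.rpow_const
        fun _ => Or.inr hq.exponent_pos.le).const_mul (∑ i, q (v i))).tendsto c₀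
  refine squeeze_zero (fun _ => dist_nonneg) (fun c => ?_) hbound
  calc dist (q (x - L c)) (q (x - L c₀))
      ≤ q (L (c₀ - c)) := by
        simpa [Real.dist_eq, map_sub] using hq.abs_sub_le (x - L c) (x - L c₀)
    _ ≤ (∑ i, q (v i)) * ‖c₀ - c‖ ^ α := hq.map_linearCombination_le v _
    _ = (∑ i, q (v i)) * ‖c - c₀‖ ^ α := by rw [norm_sub_rev]

lemma exists_pos_mul_rpow_le_linearCombination (hv : LinearIndependent 𝕜 v) :
    ∃ m > 0, ∀ c, m * ‖c‖ ^ α ≤ q (Fintype.linearCombination 𝕜 v c) := by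
  set L := Fintype.linearCombination 𝕜 v
  have hα := hq.exponent_pos
  rcases isEmpty_or_nonempty ι with hι | hι
  · refine ⟨1, one_pos, fun c => ?_⟩
    rw [Subsingleton.elim c 0, norm_zero, Real.zero_rpow hα.ne', mul_zero]
    exact hq.nonneg _
  have hQ : Continuous fun c => q (L c) := by
    simpa [hq.map_neg] using hq.continuous_sub_linearCombination v 0
  obtain ⟨c₀, hc₀, hmin⟩ := (isCompact_sphere (0 : ι → 𝕜) 1).exists_isMinOn
    (NormedSpace.sphere_nonempty.2 zero_le_one) hQ.continuousOn
  have hLc₀ : L c₀ ≠ 0 := fun h =>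
    ne_zero_of_mem_unit_sphere ⟨c₀, hc₀⟩
      (linearIndependent_iff_injective_fintypeLinearCombination.1 hv (h.trans L.map_zero.symm))
  refine ⟨q (L c₀), hq.pos_of_ne_zero hLc₀, fun c => ?_⟩
  rcases eq_or_ne c 0 with rfl | hc
  · simp [Real.zero_rpow hα.ne', hq.map_zero]
  have hc' : ((‖c‖ : ℝ) : 𝕜) ≠ 0 := by exact_mod_cast norm_ne_zero_iff.2 hc
  have hunit : ((‖c‖ : ℝ) : 𝕜)⁻¹ • c ∈ Metric.sphere (0 : ι → 𝕜) 1 := by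
    rw [mem_sphere_zero_iff_norm, norm_smul, norm_inv, RCLike.norm_ofReal, abs_norm,
      inv_mul_cancel₀ (norm_ne_zero_iff.2 hc)]
  calc q (L c₀) * ‖c‖ ^ α ≤ ‖c‖ ^ α * q (L (((‖c‖ : ℝ) : 𝕜)⁻¹ • c)) := by
        rw [mul_comm]; gcongr; exact hmin hunit
    _ = q (L c) := by
        rw [LinearMap.map_smul, ← hq.map_ofReal_smul (norm_nonneg c), smul_smul,
          mul_inv_cancel₀ hc', one_smul]

lemma exists_forall_le_sub_linearCombination (hv : LinearIndependent 𝕜 v) (x : E) :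
    ∃ c₀, ∀ c, q (x - Fintype.linearCombination 𝕜 v c₀) ≤
      q (x - Fintype.linearCombination 𝕜 v c) := by
  set L := Fintype.linearCombination 𝕜 v
  obtain ⟨m, hm, hlow⟩ := hq.exists_pos_mul_rpow_le_linearCombination v hv
  refine (hq.continuous_sub_linearCombination v x).exists_forall_le ?_
  have hcoercive : Tendsto (fun c : ι → 𝕜 => m * ‖c‖ ^ α + -q x) (cocompact _) atTop :=
    tendsto_atTop_add_const_right _ _ <| Tendsto.const_mul_atTop hm <|
      (tendsto_rpow_atTop hq.exponent_pos).comp tendsto_norm_cocompact_atTop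
  refine tendsto_atTop_mono (fun c => ?_) hcoercive
  have h := hq.sub_le_sub_add_sub (L c) x 0
  rw [sub_zero, sub_zero, hq.sub_comm] at h
  linarith [hlow c]

end LinearCombination

lemma exists_mem_forall_le_sub (F : Submodule 𝕜 E) [FiniteDimensional 𝕜 F] (x : E) :
    ∃ y₀ ∈ F, ∀ y ∈ F, q (x - y₀) ≤ q (x - y) := by
  set b := Module.finBasis 𝕜 F
  have hL : ∀ c, Fintype.linearCombination 𝕜 (F.subtype ∘ b) c = b.equivFun.symm c := by
    intro c
    simp [Fintype.linearCombination_apply, b.equivFun_symm_apply]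
  obtain ⟨c₀, hc₀⟩ := hq.exists_forall_le_sub_linearCombination (F.subtype ∘ b)
    (b.linearIndependent.map' F.subtype F.ker_subtype) x
  refine ⟨_, (b.equivFun.symm c₀).2, fun y hy => ?_⟩
  have h := hc₀ (b.equivFun ⟨y, hy⟩)
  rwa [hL, hL, LinearEquiv.symm_apply_apply] at h

lemma exists_eq_one_forall_le_sub (F : Submodule 𝕜 E) [FiniteDimensional 𝕜 F] (hF : F ≠ ⊤) :
    ∃ x, q x = 1 ∧ ∀ y ∈ F, 1 ≤ q (x - y) := by
  have hα := hq.exponent_pos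
  obtain ⟨x₀, hx₀⟩ : ∃ x₀, x₀ ∉ F := by
    by_contra! h
    exact hF (Submodule.eq_top_iff'.2 h)
  obtain ⟨y₀, hy₀, hmin⟩ := hq.exists_mem_forall_le_sub F x₀
  set r := q (x₀ - y₀)
  have hr : 0 < r := hq.pos_of_ne_zero (sub_ne_zero.2 fun h => hx₀ (h ▸ hy₀))
  set t := r ^ (-α⁻¹)
  have ht : 0 < t := Real.rpow_pos_of_pos hr _
  have htα : t ^ α = r⁻¹ := by
    rw [← Real.rpow_mul hr.le, neg_mul, inv_mul_cancel₀ hα.ne', Real.rpow_neg_one]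
  refine ⟨(t : 𝕜) • (x₀ - y₀), ?_, fun y hy => ?_⟩
  · rw [hq.map_ofReal_smul ht.le, htα, inv_mul_cancel₀ hr.ne']
  have hsub : (t : 𝕜) • (x₀ - y₀) - y = (t : 𝕜) • (x₀ - (y₀ + (t : 𝕜)⁻¹ • y)) := by
    have ht' : (t : 𝕜) ≠ 0 := RCLike.ofReal_ne_zero.2 ht.ne'
    simp only [smul_sub, smul_add, smul_smul, mul_inv_cancel₀ ht', one_smul, sub_sub]
  rw [hsub, hq.map_ofReal_smul ht.le, htα, ← div_eq_inv_mul, one_le_div hr]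
  exact hmin _ (F.add_mem hy₀ (F.smul_mem _ hy))

lemma exists_seq_eq_one_le_sub (h : ¬FiniteDimensional 𝕜 E) :
    ∃ u : ℕ → E, (∀ n, q (u n) = 1) ∧ ∀ m n, m < n → 1 ≤ q (u n - u m) := by
  refine exists_seq_of_forall_finset_exists (fun x => q x = 1) (fun x y => 1 ≤ q (y - x))
    fun s _ => ?_
  have hs : Submodule.span 𝕜 (s : Set E) ≠ ⊤ := fun hs => h ⟨⟨s, hs⟩⟩
  obtain ⟨y, hy, hsep⟩ := hq.exists_eq_one_forall_le_sub _ hs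
  exact ⟨y, hy, fun x hx => hsep x (Submodule.subset_span hx)⟩

lemma not_tendsto_of_one_le_sub {u : ℕ → E} (hu : ∀ m n, m < n → 1 ≤ q (u n - u m))
    {φ : ℕ → ℕ} (hφ : StrictMono φ) (x : E) :
    ¬Tendsto (fun n => q (u (φ n) - x)) atTop (𝓝 0) := by
  intro hlim
  obtain ⟨N, hN⟩ := eventually_atTop.1 (hlim.eventually (gt_mem_nhds one_half_pos))
  have h := hq.sub_le_sub_add_sub (u (φ (N + 1))) x (u (φ N))
  rw [hq.sub_comm x] at h
  linarith [hu _ _ (hφ N.lt_succ_self), hN N le_rfl, hN (N + 1) N.le_succ]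

lemma exists_subseq_tendsto_of_le [FiniteDimensional 𝕜 E] {u : ℕ → E} {R : ℝ}
    (hu : ∀ n, q (u n) ≤ R) :
    ∃ (x : E) (φ : ℕ → ℕ), StrictMono φ ∧ Tendsto (fun n => q (u (φ n) - x)) atTop (𝓝 0) := by
  have hα := hq.exponent_pos
  set b := Module.finBasis 𝕜 E
  have hL : ∀ c, Fintype.linearCombination 𝕜 b c = b.equivFun.symm c :=
    fun c => (b.equivFun_symm_apply c).symm
  have hLu : ∀ x, Fintype.linearCombination 𝕜 b (b.equivFun x) = x := fun x => by
    rw [hL, LinearEquiv.symm_apply_apply]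
  obtain ⟨m, hm, hlow⟩ := hq.exists_pos_mul_rpow_le_linearCombination b b.linearIndependent
  have hR : 0 ≤ R / m := div_nonneg ((hq.nonneg _).trans (hu 0)) hm.le
  have hbdd : ∀ n, b.equivFun (u n) ∈ Metric.closedBall 0 ((R / m) ^ α⁻¹) := fun n => by
    rw [mem_closedBall_zero_iff, Real.le_rpow_inv_iff_of_pos (norm_nonneg _) hR hα,
      le_div_iff₀' hm]
    exact (hlow _).trans (by rw [hLu]; exact hu n)
  obtain ⟨w, -, φ, hφ, hw⟩ := tendsto_subseq_of_bounded Metric.isBounded_closedBall hbdd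
  refine ⟨b.equivFun.symm w, φ, hφ, squeeze_zero (fun _ => hq.nonneg _) (fun n => ?_)
    (g := fun n => (∑ i, q (b i)) * ‖b.equivFun (u (φ n)) - w‖ ^ α) ?_⟩
  · have h := hq.map_linearCombination_le b (b.equivFun (u (φ n)) - w)
    rwa [map_sub, hLu, hL] at h
  · simpa [Real.zero_rpow hα.ne'] using
      (((hw.sub_const w).norm).rpow_const (Or.inr hα.le)).const_mul (∑ i, q (b i))

end IsQuasiNorm

theorem stmt_3_general {E : Type*} [AddCommGroup E] [Module ℂ E]
    (α : ℝ) (hα : 0 < α) (q : E → ℝ)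
    (hq_eq_zero : ∀ x, q x = 0 ↔ x = 0)
    (hq_smul : ∀ (c : ℂ) (x : E), q (c • x) = ‖c‖ ^ α * q x)
    (hq_add : ∀ x y, q (x + y) ≤ q x + q y) :
    List.TFAE
      [FiniteDimensional ℂ E,
       ∀ u : ℕ → E, (∀ n, q (u n) ≤ 1) →
         ∃ (x : E) (φ : ℕ → ℕ), StrictMono φ ∧
           Tendsto (fun n => q (u (φ n) - x)) atTop (nhds 0),
       ∀ u : ℕ → E, (∀ n, q (u n) = 1) →
         ∃ (x : E) (φ : ℕ → ℕ), StrictMono φ ∧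
           Tendsto (fun n => q (u (φ n) - x)) atTop (nhds 0)] := by
  have hq : IsQuasiNorm ℂ α q := ⟨hα, hq_eq_zero, hq_smul, hq_add⟩
  tfae_have 1 → 2 := fun _ _ hu => hq.exists_subseq_tendsto_of_le hu
  tfae_have 2 → 3 := fun h u hu => h u fun n => (hu n).le
  tfae_have 3 → 1 := fun h => by
    by_contra hfin
    obtain ⟨u, hu_one, hu_sep⟩ := hq.exists_seq_eq_one_le_sub hfin
    obtain ⟨x, φ, hφ, hlim⟩ := h u hu_one
    exact hq.not_tendsto_of_one_le_sub hu_sep hφ x hlim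
  tfae_finish

/-- Proposition 2.5: Riesz-type finiteness criterion for quasi-normed complex vector spaces.
Given a quasi-norm `q` on a complex vector space `E` (with homogeneity exponent `α > 0`),
the following are equivalent: `E` is finite-dimensional; every sequence in the closed unit
ball `{q ≤ 1}` has a subsequence converging in the metric `d(x,y) = q(x−y)`; every sequence
in the unit sphere `{q = 1}` has a subsequence converging in this metric. -/
theorem stmt_3 {E : Type*} [AddCommGroup E] [Module ℂ E]
    (α : ℝ) (hα : 0 < α) (q : E → ℝ)
    (hq_nonneg : ∀ x, 0 ≤ q x)
    (hq_eq_zero : ∀ x, q x = 0 ↔ x = 0)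
    (hq_smul : ∀ (c : ℂ) (x : E), q (c • x) = ‖c‖ ^ α * q x)
    (hq_add : ∀ x y, q (x + y) ≤ q x + q y) :
    List.TFAE
      [FiniteDimensional ℂ E,
       ∀ u : ℕ → E, (∀ n, q (u n) ≤ 1) →
         ∃ (x : E) (φ : ℕ → ℕ), StrictMono φ ∧
           Tendsto (fun n => q (u (φ n) - x)) atTop (nhds 0),
       ∀ u : ℕ → E, (∀ n, q (u n) = 1) →
         ∃ (x : E) (φ : ℕ → ℕ), StrictMono φ ∧
           Tendsto (fun n => q (u (φ n) - x)) atTop (nhds 0)] :=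
  stmt_3_general α hα q hq_eq_zero hq_smul hq_add
end

section
/- Let λ : (0,∞) → (0,∞) be a continuous increasing function with ∫_1^∞ dt/λ(t) < ∞, and let δ > 0. Then there exist a real number b > 1 and a nonnegative C² function κ : [0,∞) → [0,∞) such that: (i) κ′(t) ≥ 0 and κ′(t) + t·κ″(t) ≥ 0 for all t > 0; (ii) κ″(t) ≤ 0 for all t ≥ b²; (iii) κ′(t) + t·κ″(t) ≥ 1/λ(t) for all t ≥ b²; and (iv) κ(t) ≤ δ·log t for all t ≥ b². -/
/-!
Take `ϑ = 1 / λ`, frozen at its value at `t₀` below `t₀`, and `κ(t) = ∫₀ᵗ (1/s) ∫₀ˢ ϑ`. Then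
`(t κ′)′ = ϑ`, and `κ′` is a running mean of a decreasing function, hence decreasing. Choosing
`t₀ ≥ 4` with `t₀ / λ(t₀) + ∫_{t₀}^∞ 1/λ ≤ δ` (possible since `1/λ` is decreasing and integrable)
gives `∫₀ˢ ϑ ≤ δ`, so `κ′(s) ≤ δ / s` beyond `t₀` and `κ(t) ≤ δ (1 + log (t / t₀)) ≤ δ log t`.
-/

open Set MeasureTheory intervalIntegral Filter

/-- The mean `(1/s) ∫₀ˢ θ`, frozen below `t₀` so that it stays defined and smooth across `s = 0`;
when `θ` is constant on `(-∞, t₀]` it is still the mean there. -/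
noncomputable def runningMean (θ : ℝ → ℝ) (t₀ s : ℝ) : ℝ :=
  (∫ r in 0..max s t₀, θ r) / max s t₀

/-- The paper's `κ(t) = ∫₀ᵗ (1/r₁) ∫₀^{r₁} ϑ`. -/
noncomputable def meanPrimitive (θ : ℝ → ℝ) (t₀ t : ℝ) : ℝ :=
  ∫ s in 0..t, runningMean θ t₀ s

lemma integral_zero_eq_mul_of_forall_le_eq {f : ℝ → ℝ} {a : ℝ} (ha : 0 ≤ a)
    (hconst : ∀ r ≤ a, f r = f a) : ∫ r in 0..a, f r = a * f a := by
  rw [integral_congr (g := fun _ => f a) fun r hr =>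
      hconst r (by rw [uIcc_of_le ha] at hr; exact hr.2),
    intervalIntegral.integral_const, smul_eq_mul, sub_zero]

section RunningMean

variable {θ : ℝ → ℝ} {t₀ : ℝ}

lemma runningMean_of_le (ht₀ : 0 < t₀) (hconst : ∀ r ≤ t₀, θ r = θ t₀) {s : ℝ} (hs : s ≤ t₀) :
    runningMean θ t₀ s = θ t₀ := by
  rw [runningMean, max_eq_right hs, integral_zero_eq_mul_of_forall_le_eq ht₀.le hconst,
    mul_div_cancel_left₀ _ ht₀.ne']

lemma runningMean_of_ge {s : ℝ} (hs : t₀ ≤ s) :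
    runningMean θ t₀ s = (∫ r in 0..s, θ r) / s := by
  rw [runningMean, max_eq_left hs]

lemma hasDerivAt_runningMean (hθ : Continuous θ) (ht₀ : 0 < t₀)
    (hconst : ∀ r ≤ t₀, θ r = θ t₀) (s : ℝ) :
    HasDerivAt (runningMean θ t₀) ((θ s - runningMean θ t₀ s) / max s t₀) s := by
  have hIic : ∀ s ≤ t₀,
      HasDerivWithinAt (runningMean θ t₀) ((θ s - runningMean θ t₀ s) / max s t₀) (Iic t₀) s := by
    intro s hs
    rw [runningMean_of_le ht₀ hconst hs, hconst s hs, sub_self, zero_div]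
    exact (hasDerivWithinAt_const s _ (θ t₀)).congr (fun r hr => runningMean_of_le ht₀ hconst hr)
      (runningMean_of_le ht₀ hconst hs)
  have hIci : ∀ s, t₀ ≤ s →
      HasDerivWithinAt (runningMean θ t₀) ((θ s - runningMean θ t₀ s) / max s t₀) (Ici t₀) s := by
    intro s hs
    have hs₀ : s ≠ 0 := (ht₀.trans_le hs).ne'
    have hquot : HasDerivAt (fun u => (∫ r in 0..u, θ r) / u)
        ((θ s * s - (∫ r in 0..s, θ r) * 1) / s ^ 2) s :=
      (integral_hasDerivAt_right (hθ.intervalIntegrable 0 s)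
        (hθ.stronglyMeasurableAtFilter _ _) hθ.continuousAt).div (hasDerivAt_id s) hs₀
    have hval : (θ s * s - (∫ r in 0..s, θ r) * 1) / s ^ 2
        = (θ s - runningMean θ t₀ s) / max s t₀ := by
      rw [max_eq_left hs, runningMean_of_ge hs]
      field_simp
    rw [← hval]
    exact hquot.hasDerivWithinAt.congr (fun r hr => runningMean_of_ge hr) (runningMean_of_ge hs)
  rcases lt_trichotomy s t₀ with hs | rfl | hs
  · exact (hIic s hs.le).hasDerivAt (Iic_mem_nhds hs)
  · simpa [Iic_union_Ici] using (hIic s le_rfl).union (hIci s le_rfl)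
  · exact (hIci s hs.le).hasDerivAt (Ici_mem_nhds hs)

lemma deriv_runningMean (hθ : Continuous θ) (ht₀ : 0 < t₀) (hconst : ∀ r ≤ t₀, θ r = θ t₀) :
    deriv (runningMean θ t₀) = fun s => (θ s - runningMean θ t₀ s) / max s t₀ :=
  funext fun s => (hasDerivAt_runningMean hθ ht₀ hconst s).deriv

lemma continuous_runningMean (hθ : Continuous θ) (ht₀ : 0 < t₀)
    (hconst : ∀ r ≤ t₀, θ r = θ t₀) : Continuous (runningMean θ t₀) :=
  continuous_iff_continuousAt.2 fun s => (hasDerivAt_runningMean hθ ht₀ hconst s).continuousAt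

lemma continuous_deriv_runningMean (hθ : Continuous θ) (ht₀ : 0 < t₀)
    (hconst : ∀ r ≤ t₀, θ r = θ t₀) : Continuous (deriv (runningMean θ t₀)) := by
  rw [deriv_runningMean hθ ht₀ hconst]
  exact (hθ.sub (continuous_runningMean hθ ht₀ hconst)).div (continuous_id.max continuous_const)
    fun s => (ht₀.trans_le (le_max_right s t₀)).ne'

/-- `s ↦ s · runningMean θ t₀ s` is a primitive of `θ`. -/
lemma runningMean_add_mul_deriv (hθ : Continuous θ) (ht₀ : 0 < t₀)
    (hconst : ∀ r ≤ t₀, θ r = θ t₀) (s : ℝ) :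
    runningMean θ t₀ s + s * deriv (runningMean θ t₀) s = θ s := by
  rw [deriv_runningMean hθ ht₀ hconst]
  beta_reduce
  rcases le_total s t₀ with hs | hs
  · rw [runningMean_of_le ht₀ hconst hs, hconst s hs, sub_self, zero_div, mul_zero, add_zero]
  · have hs₀ : s ≠ 0 := (ht₀.trans_le hs).ne'
    rw [max_eq_left hs]
    field_simp
    ring

lemma le_runningMean (hanti : Antitone θ) (ht₀ : 0 < t₀) (hconst : ∀ r ≤ t₀, θ r = θ t₀)
    (s : ℝ) : θ s ≤ runningMean θ t₀ s := by
  rcases le_total s t₀ with hs | hs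
  · rw [runningMean_of_le ht₀ hconst hs, hconst s hs]
  · have hs₀ : 0 ≤ s := ht₀.le.trans hs
    have hmono := integral_mono_on hs₀ intervalIntegrable_const
      (hanti.intervalIntegrable (μ := volume)) fun r hr => hanti hr.2
    rw [intervalIntegral.integral_const, smul_eq_mul, sub_zero] at hmono
    rw [runningMean_of_ge hs, le_div_iff₀ (ht₀.trans_le hs), mul_comm]
    exact hmono

lemma deriv_runningMean_nonpos (hθ : Continuous θ) (hanti : Antitone θ) (ht₀ : 0 < t₀)
    (hconst : ∀ r ≤ t₀, θ r = θ t₀) (s : ℝ) : deriv (runningMean θ t₀) s ≤ 0 := by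
  rw [deriv_runningMean hθ ht₀ hconst]
  exact div_nonpos_of_nonpos_of_nonneg (sub_nonpos.2 (le_runningMean hanti ht₀ hconst s))
    (ht₀.le.trans (le_max_right s t₀))

end RunningMean

section MeanPrimitive

variable {θ : ℝ → ℝ} {t₀ : ℝ}

lemma deriv_meanPrimitive (hθ : Continuous θ) (ht₀ : 0 < t₀) (hconst : ∀ r ≤ t₀, θ r = θ t₀) :
    deriv (meanPrimitive θ t₀) = runningMean θ t₀ := by
  have hm := continuous_runningMean hθ ht₀ hconst
  exact funext fun t => (integral_hasDerivAt_right (hm.intervalIntegrable 0 t)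
    (hm.stronglyMeasurableAtFilter _ _) hm.continuousAt).deriv

lemma contDiff_meanPrimitive (hθ : Continuous θ) (ht₀ : 0 < t₀)
    (hconst : ∀ r ≤ t₀, θ r = θ t₀) : ContDiff ℝ 2 (meanPrimitive θ t₀) := by
  have hm := continuous_runningMean hθ ht₀ hconst
  rw [show (2 : WithTop ℕ∞) = 1 + 1 from rfl, contDiff_succ_iff_deriv,
    deriv_meanPrimitive hθ ht₀ hconst, contDiff_one_iff_deriv]
  exact ⟨fun t => (integral_hasDerivAt_right (hm.intervalIntegrable 0 t)
      (hm.stronglyMeasurableAtFilter _ _) hm.continuousAt).differentiableAt, by simp,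
    fun s => (hasDerivAt_runningMean hθ ht₀ hconst s).differentiableAt,
    continuous_deriv_runningMean hθ ht₀ hconst⟩

lemma meanPrimitive_nonneg (hθ₀ : ∀ r, 0 ≤ θ r) (hanti : Antitone θ) (ht₀ : 0 < t₀)
    (hconst : ∀ r ≤ t₀, θ r = θ t₀) {t : ℝ} (ht : 0 ≤ t) : 0 ≤ meanPrimitive θ t₀ t :=
  integral_nonneg ht fun s _ => (hθ₀ s).trans (le_runningMean hanti ht₀ hconst s)

/-- Beyond `t₀` the running mean is at most `M / s`, whose integral is logarithmic. -/
lemma meanPrimitive_le_mul_one_add_log (hθ : Continuous θ) (ht₀ : 0 < t₀)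
    (hconst : ∀ r ≤ t₀, θ r = θ t₀) {M : ℝ} (hM : ∀ s, t₀ ≤ s → ∫ r in 0..s, θ r ≤ M)
    {t : ℝ} (ht : t₀ ≤ t) : meanPrimitive θ t₀ t ≤ M * (1 + Real.log (t / t₀)) := by
  have hm := continuous_runningMean hθ ht₀ hconst
  have hinit : ∫ s in 0..t₀, runningMean θ t₀ s ≤ M := by
    rw [integral_zero_eq_mul_of_forall_le_eq ht₀.le fun r hr => by
        rw [runningMean_of_le ht₀ hconst hr, runningMean_of_le ht₀ hconst le_rfl],
      runningMean_of_le ht₀ hconst le_rfl, ← integral_zero_eq_mul_of_forall_le_eq ht₀.le hconst]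
    exact hM t₀ le_rfl
  have htail : ∫ s in t₀..t, runningMean θ t₀ s ≤ M * Real.log (t / t₀) := by
    have hpos : ∀ s ∈ uIcc t₀ t, 0 < s := fun s hs => by
      rw [uIcc_of_le ht] at hs; exact ht₀.trans_le hs.1
    rw [← integral_inv (fun h0 => (hpos 0 h0).false), ← intervalIntegral.integral_const_mul]
    refine integral_mono_on ht (hm.intervalIntegrable _ _)
      ((continuousOn_inv₀.mono fun s hs => (hpos s hs).ne').const_smul M |>.intervalIntegrable)
      fun s hs => ?_
    rw [runningMean_of_ge hs.1, div_eq_mul_inv]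
    exact mul_le_mul_of_nonneg_right (hM s hs.1) (inv_nonneg.2 (hpos s (by rwa [uIcc_of_le ht])).le)
  rw [meanPrimitive, ← integral_add_adjacent_intervals (hm.intervalIntegrable 0 t₀)
    (hm.intervalIntegrable t₀ t)]
  linarith

end MeanPrimitive

section Reciprocal

variable {lam : ℝ → ℝ}

lemma continuous_one_div_comp_max (hpos : ∀ t, 0 < t → 0 < lam t)
    (hcont : ContinuousOn lam (Ioi 0)) {t₀ : ℝ} (ht₀ : 0 < t₀) :
    Continuous fun r => 1 / lam (max r t₀) := by
  have hmax : ∀ r, 0 < max r t₀ := fun r => ht₀.trans_le (le_max_right r t₀)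
  exact continuous_const.div (hcont.comp_continuous (continuous_id.max continuous_const) hmax)
    fun r => (hpos _ (hmax r)).ne'

lemma antitone_one_div_comp_max (hpos : ∀ t, 0 < t → 0 < lam t)
    (hmono : MonotoneOn lam (Ioi 0)) {t₀ : ℝ} (ht₀ : 0 < t₀) :
    Antitone fun r => 1 / lam (max r t₀) := by
  have hmax : ∀ r, 0 < max r t₀ := fun r => ht₀.trans_le (le_max_right r t₀)
  exact fun r r' hr => one_div_le_one_div_of_le (hpos _ (hmax r))
    (hmono (hmax r) (hmax r') (max_le_max_right t₀ hr))

lemma integral_one_div_comp_max_le (hpos : ∀ t, 0 < t → 0 < lam t)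
    (hcont : ContinuousOn lam (Ioi 0)) {t₀ : ℝ} (ht₀ : 0 < t₀)
    (hint : IntegrableOn (fun t => 1 / lam t) (Ioi t₀)) {s : ℝ} (hs : t₀ ≤ s) :
    ∫ r in 0..s, 1 / lam (max r t₀) ≤ t₀ / lam t₀ + ∫ t in Ioi t₀, 1 / lam t := by
  have hθ := continuous_one_div_comp_max hpos hcont ht₀
  rw [← integral_add_adjacent_intervals (hθ.intervalIntegrable 0 t₀) (hθ.intervalIntegrable t₀ s),
    integral_zero_eq_mul_of_forall_le_eq ht₀.le fun r hr => by simp only [max_eq_right hr, max_self],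
    max_self, mul_one_div, integral_of_le hs,
    setIntegral_congr_fun (g := fun t => 1 / lam t) measurableSet_Ioc
      fun r hr => by simp only [max_eq_left hr.1.le]]
  refine add_le_add_right (setIntegral_mono_set hint ?_ Ioc_subset_Ioi_self.eventuallyLE) _
  filter_upwards [self_mem_ae_restrict measurableSet_Ioi] with t ht
  exact (one_div_pos.2 (hpos t (ht₀.trans ht))).le

/-- `t₀ / λ(t₀)` is controlled by the tail integral from `t₀ / 2`, since `1 / λ` decreases. -/
lemma exists_div_add_integral_Ioi_le (hpos : ∀ t, 0 < t → 0 < lam t)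
    (hmono : MonotoneOn lam (Ioi 0)) (hint : IntegrableOn (fun t => 1 / lam t) (Ioi 1))
    {ε : ℝ} (hε : 0 < ε) : ∃ t₀, 4 ≤ t₀ ∧ t₀ / lam t₀ + ∫ t in Ioi t₀, 1 / lam t ≤ ε := by
  obtain ⟨x, hxtail, hx⟩ : ∃ x, ∫ t in Ioi x, 1 / lam t ≤ ε / 3 ∧ 2 ≤ x :=
    ((tendsto_integral_Ioi_zero (f := fun t => 1 / lam t) (μ := volume) tendsto_id
      ).eventually_le_const (by positivity : 0 < ε / 3)).and (eventually_ge_atTop 2) |>.exists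
  have hx₀ : 0 < x := by linarith
  have hintx : IntegrableOn (fun t => 1 / lam t) (Ioi x) :=
    hint.mono_set (Ioi_subset_Ioi (by linarith))
  have hsub : ∀ S ⊆ Ioi x, ∫ t in S, 1 / lam t ≤ ∫ t in Ioi x, 1 / lam t := fun S hS => by
    refine setIntegral_mono_set hintx ?_ hS.eventuallyLE
    filter_upwards [self_mem_ae_restrict measurableSet_Ioi] with t ht
    exact (one_div_pos.2 (hpos t (hx₀.trans ht))).le
  have hhead : x * (1 / lam (2 * x)) ≤ ∫ t in x..2 * x, 1 / lam t := by
    have hmono' := integral_mono_on (a := x) (b := 2 * x) (by linarith) intervalIntegrable_const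
      ((intervalIntegrable_iff_integrableOn_Ioc_of_le (by linarith)).2
        (hintx.mono_set Ioc_subset_Ioi_self)) fun t ht =>
        one_div_le_one_div_of_le (hpos t (hx₀.trans_le ht.1))
          (hmono (hx₀.trans_le ht.1) (mem_Ioi.2 (by linarith)) ht.2)
    rwa [intervalIntegral.integral_const, smul_eq_mul, show 2 * x - x = x by ring] at hmono'
  rw [integral_of_le (by linarith)] at hhead
  have hfirst := hsub (Ioc x (2 * x)) Ioc_subset_Ioi_self
  have hlast := hsub _ (Ioi_subset_Ioi (by linarith : x ≤ 2 * x))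
  refine ⟨2 * x, by linarith, ?_⟩
  rw [mul_div_assoc, ← mul_one_div x]
  linarith

end Reciprocal

/-- Real-variable core of Lemma 4.1: given a continuous increasing `λ : (0,∞) → (0,∞)` with
`∫_1^∞ dt/λ(t) < ∞` and `δ > 0`, there are `b > 1` and a nonnegative `C²` function
`κ : [0,∞) → [0,∞)` with `κ′ ≥ 0` and `κ′(t) + tκ″(t) ≥ 0` for `t > 0`, `κ″(t) ≤ 0` and
`κ′(t) + tκ″(t) ≥ 1/λ(t)` and `κ(t) ≤ δ log t` for `t ≥ b²`. -/
theorem stmt_6 (lam : ℝ → ℝ)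
    (hlam_pos : ∀ t, 0 < t → 0 < lam t)
    (hlam_cont : ContinuousOn lam (Ioi 0))
    (hlam_mono : MonotoneOn lam (Ioi 0))
    (hlam_int : MeasureTheory.IntegrableOn (fun t => 1 / lam t) (Ioi 1))
    (δ : ℝ) (hδ : 0 < δ) :
    ∃ (b : ℝ) (κ : ℝ → ℝ), 1 < b ∧
      ContDiffOn ℝ 2 κ (Ici 0) ∧
      (∀ t, 0 ≤ t → 0 ≤ κ t) ∧
      (∀ t, 0 < t → 0 ≤ deriv κ t ∧ 0 ≤ deriv κ t + t * deriv (deriv κ) t) ∧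
      (∀ t, b ^ 2 ≤ t → deriv (deriv κ) t ≤ 0) ∧
      (∀ t, b ^ 2 ≤ t → 1 / lam t ≤ deriv κ t + t * deriv (deriv κ) t) ∧
      (∀ t, b ^ 2 ≤ t → κ t ≤ δ * Real.log t) := by
  obtain ⟨t₀, ht₀, hsmall⟩ := exists_div_add_integral_Ioi_le hlam_pos hlam_mono hlam_int hδ
  have ht₀pos : 0 < t₀ := by linarith
  set θ : ℝ → ℝ := fun r => 1 / lam (max r t₀)
  have hθ : Continuous θ := continuous_one_div_comp_max hlam_pos hlam_cont ht₀pos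
  have hanti : Antitone θ := antitone_one_div_comp_max hlam_pos hlam_mono ht₀pos
  have hconst : ∀ r ≤ t₀, θ r = θ t₀ := fun r hr => by simp only [θ, max_eq_right hr, max_self]
  have hθ₀ : ∀ r, 0 ≤ θ r := fun r =>
    (one_div_pos.2 (hlam_pos _ (ht₀pos.trans_le (le_max_right r t₀)))).le
  have hM : ∀ s, t₀ ≤ s → ∫ r in 0..s, θ r ≤ δ := fun s hs =>
    (integral_one_div_comp_max_le hlam_pos hlam_cont ht₀pos
      (hlam_int.mono_set (Ioi_subset_Ioi (by linarith))) hs).trans hsmall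
  have hlog : 1 ≤ Real.log t₀ := by
    rw [Real.le_log_iff_exp_le ht₀pos]
    linarith [Real.exp_one_lt_d9]
  have hκ' := deriv_meanPrimitive hθ ht₀pos hconst
  have hκ'' := runningMean_add_mul_deriv hθ ht₀pos hconst
  refine ⟨√t₀, meanPrimitive θ t₀, (Real.lt_sqrt zero_le_one).2 (by linarith),
    (contDiff_meanPrimitive hθ ht₀pos hconst).contDiffOn,
    fun t => meanPrimitive_nonneg hθ₀ hanti ht₀pos hconst, fun t _ => ?_, ?_⟩
  · rw [hκ', hκ'']
    exact ⟨(hθ₀ t).trans (le_runningMean hanti ht₀pos hconst t), hθ₀ t⟩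
  simp only [Real.sq_sqrt ht₀pos.le, hκ', hκ'']
  refine ⟨fun t _ => deriv_runningMean_nonpos hθ hanti ht₀pos hconst t,
    fun t ht => by simp only [θ, max_eq_left ht, le_refl], fun t ht => ?_⟩
  have hκ := meanPrimitive_le_mul_one_add_log hθ ht₀pos hconst hM ht
  rw [Real.log_div (by linarith) ht₀pos.ne'] at hκ
  nlinarith
end

section
/- Let f : ℂ → ℂ be an entire function that is not a polynomial (i.e., f is transcendental). Then the set E = { g : ℂ → ℂ entire : ∫_ℂ |g(z)|² (1 + |f′(z)|²)^{−2} dA(z) < ∞ }, where dA is Lebesgue measure on ℂ ≅ ℝ², is a complex vector subspace of the space of entire functions, and E is infinite-dimensional over ℂ. -/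
/-!
Write `φ = f′` and let `ψₖ = (φ - Tₖ)/zᵏ`, where `Tₖ` is the Taylor polynomial of `φ` at `0` of
degree `< k`; it is entire, and for `|z| ≥ 1` the bound `|Tₖ₊₁(z)| ≤ M |z|ᵏ` gives
`|z ψₖ₊₁(z)| ≤ |φ(z)| + M`. Hence `|ψ₁ ψₖ₊₁|² (1 + |φ|²)⁻² = O(|z|⁻⁴)`, which is integrable on
`ℂ ≅ ℝ²`, so every `ψ₁ ψₖ₊₁` lies in the space. A linear relation among the `ψₖ₊₁`, multiplied by
`z^N`, becomes `A φ = B` with polynomials `A ≠ 0` and `B`; dividing out the roots of `A` one at a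
time shows that `φ`, hence `f`, would be a polynomial. Multiplying by the nonzero entire function
`ψ₁` keeps the family independent, by the identity theorem.
-/

open MeasureTheory Polynomial Filter

theorem integrable_of_norm_le_div_norm_pow {E : Type*} [NormedAddCommGroup E] [NormedSpace ℝ E]
    [FiniteDimensional ℝ E] [MeasurableSpace E] [BorelSpace E] {μ : Measure E}
    [μ.IsAddHaarMeasure] {F : E → ℝ} {n : ℕ} (hn : Module.finrank ℝ E < n) (hF : Continuous F)
    (K : ℝ) (hK : ∀ x, 1 ≤ ‖x‖ → ‖F x‖ ≤ K / ‖x‖ ^ n) :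
    Integrable F μ := by
  refine hF.locallyIntegrable.integrable_of_isBigO_cocompact
    (g := fun x => (1 + ‖x‖) ^ (-(n : ℝ)))
    (Asymptotics.IsBigO.of_bound (2 ^ n * K) ?_)
    ((integrable_one_add_norm (by exact_mod_cast hn)).integrableAtFilter _)
  filter_upwards [tendsto_norm_cocompact_atTop.eventually_ge_atTop 1] with x hx
  have hpos : 0 < ‖x‖ ^ n := by positivity
  have hK0 : 0 ≤ K := by
    have := (norm_nonneg _).trans (hK x hx)
    rwa [le_div_iff₀ hpos, zero_mul] at this
  rw [Real.norm_of_nonneg (by positivity : (0 : ℝ) ≤ (1 + ‖x‖) ^ (-(n : ℝ))),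
    Real.rpow_neg (by positivity), Real.rpow_natCast, ← div_eq_mul_inv]
  calc ‖F x‖ ≤ K / ‖x‖ ^ n := hK x hx
    _ ≤ 2 ^ n * K / (1 + ‖x‖) ^ n := by
      rw [div_le_div_iff₀ hpos (by positivity), mul_comm (2 ^ n), mul_assoc, ← mul_pow]
      gcongr
      linarith

theorem norm_sum_range_mul_pow_le {𝕜 : Type*} [NormedField 𝕜] (a : ℕ → 𝕜) (n : ℕ) {z : 𝕜}
    (hz : 1 ≤ ‖z‖) :
    ‖∑ k ∈ Finset.range (n + 1), a k * z ^ k‖ ≤ (∑ k ∈ Finset.range (n + 1), ‖a k‖) * ‖z‖ ^ n := by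
  refine (norm_sum_le _ _).trans ?_
  rw [Finset.sum_mul]
  refine Finset.sum_le_sum fun k hk => ?_
  rw [norm_mul, norm_pow]
  exact mul_le_mul_of_nonneg_left
    (pow_le_pow_right₀ hz (Nat.lt_succ_iff.mp (Finset.mem_range.mp hk))) (norm_nonneg _)

section

variable {𝕜 : Type*} [NontriviallyNormedField 𝕜] {φ : 𝕜 → 𝕜}

theorem exists_mul_eval_eq_of_X_sub_C_mul (hφ : Continuous φ) {r : 𝕜} {A B : 𝕜[X]}
    (h : ∀ z, ((X - C r) * A).eval z * φ z = B.eval z) :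
    ∃ B' : 𝕜[X], ∀ z, A.eval z * φ z = B'.eval z := by
  have hr : B.IsRoot r := by simpa using (h r).symm
  obtain ⟨B', rfl⟩ := dvd_iff_isRoot.mpr hr
  refine ⟨B', fun z => ?_⟩
  have hcont : Continuous fun z => A.eval z * φ z := A.continuous.mul hφ
  refine congrFun (hcont.ext_on (dense_compl_singleton r) B'.continuous fun z hz => ?_) z
  have hz : z - r ≠ 0 := sub_ne_zero.mpr hz
  apply mul_left_cancel₀ hz
  simpa [mul_assoc] using h z

theorem exists_eval_eq_of_mul_eval_eq [IsAlgClosed 𝕜] (hφ : Continuous φ) {A B : 𝕜[X]}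
    (hA : A ≠ 0) (h : ∀ z, A.eval z * φ z = B.eval z) :
    ∃ Q : 𝕜[X], ∀ z, φ z = Q.eval z := by
  have key : ∀ (m : Multiset 𝕜) (B : 𝕜[X]),
      (∀ z, (m.map fun r => X - C r).prod.eval z * φ z = B.eval z) →
        ∃ Q : 𝕜[X], ∀ z, φ z = Q.eval z := by
    intro m
    induction m using Multiset.induction_on with
    | empty => exact fun B h => ⟨B, by simpa using h⟩
    | cons r m ih =>
      intro B h
      obtain ⟨B', hB'⟩ := exists_mul_eval_eq_of_X_sub_C_mul hφ (by simpa using h)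
      exact ih B' hB'
  have hsplit :=
    C_leadingCoeff_mul_prod_multiset_X_sub_C (IsAlgClosed.card_roots_eq_natDegree (p := A))
  refine key A.roots (C A.leadingCoeff⁻¹ * B) fun z => ?_
  have := h z
  rw [← hsplit, eval_mul, eval_C] at this
  rw [eval_mul, eval_C, ← this, mul_assoc, inv_mul_cancel_left₀ (leadingCoeff_ne_zero.mpr hA)]

noncomputable def dslopeIter (φ : 𝕜 → 𝕜) (k : ℕ) : 𝕜 → 𝕜 :=
  (Function.swap dslope (0 : 𝕜))^[k] φ

noncomputable def dslopeTaylor (φ : 𝕜 → 𝕜) (n : ℕ) : 𝕜[X] :=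
  ∑ k ∈ Finset.range n, C (dslopeIter φ k 0) * X ^ k

theorem dslopeIter_succ (k : ℕ) : dslopeIter φ (k + 1) = dslope (dslopeIter φ k) 0 :=
  Function.iterate_succ_apply' _ _ _

theorem pow_mul_dslopeIter (n : ℕ) (z : 𝕜) :
    z ^ n * dslopeIter φ n z = φ z - (dslopeTaylor φ n).eval z := by
  induction n with
  | zero => simp [dslopeIter, dslopeTaylor]
  | succ n ih =>
    have hstep : z * dslopeIter φ (n + 1) z = dslopeIter φ n z - dslopeIter φ n 0 := by
      simpa [dslopeIter_succ] using sub_smul_dslope (dslopeIter φ n) 0 z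
    rw [dslopeTaylor, Finset.sum_range_succ, ← dslopeTaylor, eval_add, pow_succ, mul_assoc, hstep,
      mul_sub, ih]
    simp only [eval_mul, eval_C, eval_pow, eval_X]
    ring

theorem exists_norm_dslopeIter_mul_norm_le (n : ℕ) :
    ∃ M, ∀ z : 𝕜, 1 ≤ ‖z‖ → ‖dslopeIter φ (n + 1) z‖ * ‖z‖ ≤ ‖φ z‖ + M := by
  refine ⟨∑ k ∈ Finset.range (n + 1), ‖dslopeIter φ k 0‖, fun z hz => ?_⟩
  have hpos : 0 < ‖z‖ ^ n := pow_pos (one_pos.trans_le hz) n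
  refine le_of_mul_le_mul_right ?_ hpos
  calc ‖dslopeIter φ (n + 1) z‖ * ‖z‖ * ‖z‖ ^ n
      = ‖φ z - (dslopeTaylor φ (n + 1)).eval z‖ := by
        rw [← pow_mul_dslopeIter, norm_mul, norm_pow, pow_succ']; ring
    _ ≤ ‖φ z‖ + (∑ k ∈ Finset.range (n + 1), ‖dslopeIter φ k 0‖) * ‖z‖ ^ n := by
        refine (norm_sub_le _ _).trans (add_le_add le_rfl ?_)
        simpa [dslopeTaylor, eval_finsetSum] using norm_sum_range_mul_pow_le _ n hz
    _ ≤ (‖φ z‖ + ∑ k ∈ Finset.range (n + 1), ‖dslopeIter φ k 0‖) * ‖z‖ ^ n := by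
        rw [add_mul]
        gcongr
        exact le_mul_of_one_le_right (norm_nonneg _) (one_le_pow₀ hz)

theorem exists_sq_norm_dslopeIter_mul_norm_le (n : ℕ) :
    ∃ C, ∀ z : 𝕜, 1 ≤ ‖z‖ → (‖dslopeIter φ (n + 1) z‖ * ‖z‖) ^ 2 ≤ C * (1 + ‖φ z‖ ^ 2) := by
  obtain ⟨M, hM⟩ := exists_norm_dslopeIter_mul_norm_le (φ := φ) n
  refine ⟨2 * (1 + M ^ 2), fun z hz => ?_⟩
  calc (‖dslopeIter φ (n + 1) z‖ * ‖z‖) ^ 2 ≤ (‖φ z‖ + M) ^ 2 :=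
        pow_le_pow_left₀ (by positivity) (hM z hz) 2
    _ ≤ 2 * (1 + M ^ 2) * (1 + ‖φ z‖ ^ 2) := by
        nlinarith [sq_nonneg (‖φ z‖ - M), sq_nonneg (M * ‖φ z‖)]

theorem linearIndependent_dslopeIter [IsAlgClosed 𝕜] (hφ : Continuous φ)
    (hnp : ¬∃ p : 𝕜[X], ∀ z, φ z = p.eval z) :
    LinearIndependent 𝕜 fun k : ℕ => dslopeIter φ (k + 1) := by
  rw [linearIndependent_iff']
  intro s c hs i hi
  by_contra hci
  set N := s.sup id + 1
  have hlt : ∀ k ∈ s, k < N := fun k hk => Nat.lt_succ_of_le (Finset.le_sup (f := id) hk)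
  set A : 𝕜[X] := ∑ k ∈ s, C (c k) * X ^ (N - (k + 1))
  set B : 𝕜[X] := ∑ k ∈ s, C (c k) * X ^ (N - (k + 1)) * dslopeTaylor φ (k + 1)
  have hAB : ∀ z, A.eval z * φ z = B.eval z := by
    intro z
    have hz : ∑ k ∈ s, c k * (z ^ N * dslopeIter φ (k + 1) z) = 0 := by
      simpa [Finset.mul_sum, mul_left_comm] using congrArg (z ^ N * ·) (congrFun hs z)
    rw [← sub_eq_zero, ← hz]
    simp only [A, B, eval_finsetSum, Finset.sum_mul, ← Finset.sum_sub_distrib]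
    refine Finset.sum_congr rfl fun k hk => ?_
    have hN : z ^ N = z ^ (N - (k + 1)) * z ^ (k + 1) := by
      rw [← pow_add, Nat.sub_add_cancel (hlt k hk)]
    rw [hN, mul_assoc (z ^ _), pow_mul_dslopeIter]
    simp only [eval_mul, eval_C, eval_pow, eval_X]
    ring
  have hA : A.coeff (N - (i + 1)) = c i := by
    simp only [A, finsetSum_coeff, coeff_C_mul_X_pow]
    refine (Finset.sum_eq_single i (fun k hk hki => if_neg ?_) (absurd hi)).trans (if_pos rfl)
    have := hlt k hk
    have := hlt i hi
    omega
  exact hnp (exists_eval_eq_of_mul_eval_eq hφ (fun h => hci (by simpa [h] using hA.symm)) hAB)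

theorem dslopeIter_ne_zero (hnp : ¬∃ p : 𝕜[X], ∀ z, φ z = p.eval z) (k : ℕ) :
    dslopeIter φ k ≠ 0 := fun h =>
  hnp ⟨dslopeTaylor φ k, fun z =>
    sub_eq_zero.mp (by simpa [h] using (pow_mul_dslopeIter (φ := φ) k z).symm)⟩

end

theorem Differentiable.dslopeIter {φ : ℂ → ℂ} (hφ : Differentiable ℂ φ) (k : ℕ) :
    Differentiable ℂ (dslopeIter φ k) := by
  induction k with
  | zero => exact hφ
  | succ k ih =>
    rw [dslopeIter_succ]
    exact differentiableOn_univ.mp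
      ((Complex.differentiableOn_dslope univ_mem).mpr ih.differentiableOn)

theorem Polynomial.exists_derivative_eq {K : Type*} [Field K] [CharZero K] (Q : K[X]) :
    ∃ R : K[X], derivative R = Q := by
  induction Q using Polynomial.induction_on' with
  | add p q hp hq =>
    obtain ⟨P, rfl⟩ := hp
    obtain ⟨P', rfl⟩ := hq
    exact ⟨P + P', derivative_add⟩
  | monomial n a =>
    refine ⟨monomial (n + 1) (a / (n + 1)), ?_⟩
    rw [derivative_monomial, Nat.add_sub_cancel, Nat.cast_add_one,
      div_mul_cancel₀ _ (Nat.cast_add_one_ne_zero n)]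

theorem exists_eval_eq_of_deriv_eq {f : ℂ → ℂ} (hf : Differentiable ℂ f) {Q : ℂ[X]}
    (hQ : ∀ z, deriv f z = Q.eval z) : ∃ p : ℂ[X], ∀ z, f z = p.eval z := by
  obtain ⟨R, hR⟩ := Q.exists_derivative_eq
  have hderiv : ∀ z, deriv (fun z => f z - R.eval z) z = 0 := fun z => by
    rw [deriv_fun_sub (hf z) (R.differentiable z), Polynomial.deriv, hR, hQ z, sub_self]
  refine ⟨R + C (f 0 - R.eval 0), fun z => ?_⟩
  have : f z - R.eval z = f 0 - R.eval 0 :=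
    is_const_of_deriv_eq_zero (hf.sub R.differentiable) hderiv z 0
  simp only [eval_add, eval_C]
  linear_combination this

theorem LinearIndependent.mul_left_of_differentiable {ι : Type*} {h : ℂ → ℂ} {v : ι → ℂ → ℂ}
    (hli : LinearIndependent ℂ v) (hh : Differentiable ℂ h) (hh0 : h ≠ 0)
    (hv : ∀ i, Differentiable ℂ (v i)) : LinearIndependent ℂ fun i => h * v i := by
  rw [linearIndependent_iff'] at hli ⊢
  intro s c hs
  refine hli s c ?_
  have hdiff : Differentiable ℂ (∑ i ∈ s, c i • v i) :=
    Differentiable.sum fun i _ => (hv i).const_smul (c i)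
  have hmul : ∀ z ∈ Set.univ, h z * (∑ i ∈ s, c i • v i) z = 0 := fun z _ => by
    simpa [Finset.mul_sum, mul_left_comm] using congrFun hs z
  obtain h0 | h0 := AnalyticOnNhd.eq_zero_or_eq_zero_of_mul_eq_zero
    (hh.differentiableOn.analyticOnNhd isOpen_univ)
    (hdiff.differentiableOn.analyticOnNhd isOpen_univ) hmul isPreconnected_univ
  · exact absurd (funext fun z => h0 z trivial) hh0
  · exact funext fun z => h0 z trivial

noncomputable def entireL2 (w : ℂ → ℝ) (hw : Measurable w) (hw0 : ∀ z, 0 ≤ w z)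
    (μ : Measure ℂ) : Submodule ℂ (ℂ → ℂ) where
  carrier := {g | Differentiable ℂ g ∧ Integrable (fun z => ‖g z‖ ^ 2 / w z) μ}
  zero_mem' := ⟨differentiable_const 0, by simp⟩
  add_mem' := by
    rintro g h ⟨hg, hgi⟩ ⟨hh, hhi⟩
    refine ⟨hg.add hh, ((hgi.const_mul 2).add (hhi.const_mul 2)).mono'
      (((hg.add hh).continuous.norm.pow 2).measurable.div hw).aestronglyMeasurable
      (Eventually.of_forall fun z => ?_)⟩
    rw [Real.norm_of_nonneg (div_nonneg (sq_nonneg _) (hw0 z))]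
    change _ ≤ 2 * (‖g z‖ ^ 2 / w z) + 2 * (‖h z‖ ^ 2 / w z)
    rw [mul_div_assoc', mul_div_assoc', ← add_div]
    gcongr
    · exact hw0 z
    · calc ‖(g + h) z‖ ^ 2 ≤ (‖g z‖ + ‖h z‖) ^ 2 := by gcongr; exact norm_add_le _ _
        _ ≤ 2 * ‖g z‖ ^ 2 + 2 * ‖h z‖ ^ 2 := by nlinarith [sq_nonneg (‖g z‖ - ‖h z‖)]
  smul_mem' := by
    rintro c g ⟨hg, hgi⟩
    refine ⟨hg.const_smul c, ?_⟩
    simpa [norm_smul, mul_pow, mul_div_assoc] using hgi.const_mul (‖c‖ ^ 2)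

theorem dslopeIter_one_mul_mem_entireL2 {φ : ℂ → ℂ} (hφ : Differentiable ℂ φ)
    (hw : Measurable fun z => (1 + ‖φ z‖ ^ 2) ^ 2) (k : ℕ) :
    dslopeIter φ 1 * dslopeIter φ (k + 1) ∈
      entireL2 (fun z => (1 + ‖φ z‖ ^ 2) ^ 2) hw (fun z => by positivity) volume := by
  have hdiff := (hφ.dslopeIter 1).mul (hφ.dslopeIter (k + 1))
  refine ⟨hdiff, ?_⟩
  obtain ⟨C₁, hC₁⟩ := exists_sq_norm_dslopeIter_mul_norm_le (φ := φ) 0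
  obtain ⟨C₂, hC₂⟩ := exists_sq_norm_dslopeIter_mul_norm_le (φ := φ) k
  have hφc := hφ.continuous
  refine integrable_of_norm_le_div_norm_pow (n := 4) (by simp) ((hdiff.continuous.norm.pow 2).div
    (by fun_prop) fun z => by positivity) (C₁ * C₂) fun z hz => ?_
  have hw0 : 0 < (1 + ‖φ z‖ ^ 2) ^ 2 := by positivity
  rw [Real.norm_of_nonneg (by positivity), div_le_div_iff₀ hw0 (by positivity)]
  calc ‖(dslopeIter φ 1 * dslopeIter φ (k + 1)) z‖ ^ 2 * ‖z‖ ^ 4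
      = (‖dslopeIter φ 1 z‖ * ‖z‖) ^ 2 * (‖dslopeIter φ (k + 1) z‖ * ‖z‖) ^ 2 := by
        rw [Pi.mul_apply, norm_mul]; ring
    _ ≤ (C₁ * (1 + ‖φ z‖ ^ 2)) * (C₂ * (1 + ‖φ z‖ ^ 2)) :=
        mul_le_mul (hC₁ z hz) (hC₂ z hz) (by positivity) ((sq_nonneg _).trans (hC₁ z hz))
    _ = C₁ * C₂ * (1 + ‖φ z‖ ^ 2) ^ 2 := by ring

theorem not_finiteDimensional_entireL2 {φ : ℂ → ℂ} (hφ : Differentiable ℂ φ)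
    (hnp : ¬∃ p : ℂ[X], ∀ z, φ z = p.eval z) (hw : Measurable fun z => (1 + ‖φ z‖ ^ 2) ^ 2) :
    ¬FiniteDimensional ℂ
      (entireL2 (fun z => (1 + ‖φ z‖ ^ 2) ^ 2) hw (fun z => by positivity) volume) := by
  intro hfin
  have hli := (linearIndependent_dslopeIter hφ.continuous hnp).mul_left_of_differentiable
    (hφ.dslopeIter 1) (dslopeIter_ne_zero hnp 1) fun k => hφ.dslopeIter (k + 1)
  set E := entireL2 (fun z => (1 + ‖φ z‖ ^ 2) ^ 2) hw (fun z => by positivity) volume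
  let v : ℕ → E := fun k => ⟨_, dslopeIter_one_mul_mem_entireL2 hφ hw k⟩
  exact Module.Finite.not_linearIndependent_of_infinite v (LinearIndependent.of_comp E.subtype hli)

/-- Theorem 1.12 of the paper (the assertion `P_{3,L²}(Γ(f)) = ∞`): if `f` is a transcendental
entire function on `ℂ`, then the set of entire functions `g` with
`∫_ℂ |g|² (1+|f′|²)^{−2} dA < ∞` is a complex vector subspace of `ℂ → ℂ`, and it is
infinite-dimensional over `ℂ`. -/
theorem stmt_8 (f : ℂ → ℂ) (hf : Differentiable ℂ f)
    (htrans : ¬ ∃ p : Polynomial ℂ, ∀ z, f z = p.eval z) :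
    ∃ E : Submodule ℂ (ℂ → ℂ),
      (E : Set (ℂ → ℂ)) = {g | Differentiable ℂ g ∧
        Integrable (fun z : ℂ => ‖g z‖ ^ 2 / (1 + ‖deriv f z‖ ^ 2) ^ 2)} ∧
      ¬ FiniteDimensional ℂ E := by
  have hw : Measurable fun z => (1 + ‖deriv f z‖ ^ 2) ^ 2 := by
    have := hf.deriv.continuous; fun_prop
  refine ⟨_, rfl, not_finiteDimensional_entireL2 hf.deriv ?_ hw⟩
  rintro ⟨Q, hQ⟩
  exact htrans (exists_eval_eq_of_deriv_eq hf hQ)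
end

section
/- Let F : ℂ → ℂ be an entire function, not identically zero, whose zero set {z ∈ ℂ : F(z) = 0} is infinite. Then the complex vector space { g : ℂ → ℂ entire : ∫_ℂ |g(z)|² (1 + |F(z)|²)^{−2} dA(z) < ∞ } is infinite-dimensional over ℂ, where dA is Lebesgue measure on ℂ ≅ ℝ². -/
open MeasureTheory

/-- The sequence of "divided" functions: `fseq F a n = F / ∏_{k<n} (z - a k)`,
constructed via iterated `dslope` so that it is automatically entire. -/
noncomputable def fseq (F : ℂ → ℂ) (a : ℕ → ℂ) : ℕ → ℂ → ℂ
  | 0 => F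
  | (n+1) => dslope (fseq F a n) (a n)

lemma diff_dslope {f : ℂ → ℂ} (hf : Differentiable ℂ f) (a : ℂ) :
    Differentiable ℂ (dslope f a) := by
  intro b
  rcases eq_or_ne b a with rfl | hb
  · obtain ⟨p, hp⟩ := hf.analyticAt b
    exact hp.has_fpower_series_dslope_fslope.analyticAt.differentiableAt
  · exact (differentiableAt_dslope_of_ne hb).2 (hf b)

lemma fseq_diff {F : ℂ → ℂ} (hF : Differentiable ℂ F) (a : ℕ → ℂ) :
    ∀ n, Differentiable ℂ (fseq F a n)
  | 0 => hF
  | (n+1) => diff_dslope (fseq_diff hF a n) (a n)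

lemma fseq_mul {F : ℂ → ℂ} {a : ℕ → ℂ}
    (ha : Function.Injective a) (hFa : ∀ k, F (a k) = 0) :
    ∀ n z, (∏ k ∈ Finset.range n, (z - a k)) * fseq F a n z = F z := by
  intro n
  induction n with
  | zero => intro z; simp [fseq]
  | succ n ih =>
    have hfa : fseq F a n (a n) = 0 := by
      have h1 := ih (a n)
      have h2 : (∏ k ∈ Finset.range n, (a n - a k)) ≠ 0 := by
        rw [Finset.prod_ne_zero_iff]
        intro k hk
        exact sub_ne_zero.2 (ha.ne (Nat.ne_of_gt (Finset.mem_range.1 hk)))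
      rw [hFa n] at h1
      exact (mul_eq_zero.1 h1).resolve_left h2
    intro z
    rw [Finset.prod_range_succ, fseq]
    have := sub_smul_dslope (fseq F a n) (a n) z
    rw [smul_eq_mul] at this
    calc (∏ k ∈ Finset.range n, (z - a k)) * (z - a n) * dslope (fseq F a n) (a n) z
        = (∏ k ∈ Finset.range n, (z - a k)) * ((z - a n) * dslope (fseq F a n) (a n) z) := by
          ring
      _ = (∏ k ∈ Finset.range n, (z - a k)) * (fseq F a n z - fseq F a n (a n)) := by rw [this]
      _ = F z := by rw [hfa, sub_zero, ih z]

lemma Fdense {F : ℂ → ℂ} (hF : Differentiable ℂ F) (hF0 : ∃ z, F z ≠ 0) :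
    Dense {z : ℂ | F z ≠ 0} := by
  rw [dense_iff_inter_open]
  rintro U hU ⟨z₀, hz₀⟩
  by_contra h
  push_neg at h
  have hev : F =ᶠ[nhds z₀] 0 := by
    filter_upwards [hU.mem_nhds hz₀] with z hz
    by_contra hz'
    exact (Set.eq_empty_iff_forall_notMem.1 h z) ⟨hz, hz'⟩
  obtain ⟨w, hw⟩ := hF0
  exact hw ((hF.differentiableOn.analyticOnNhd
    isOpen_univ).eqOn_zero_of_preconnected_of_eventuallyEq_zero
    isPreconnected_univ (Set.mem_univ z₀) hev (Set.mem_univ w))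

lemma fseq_indep {F : ℂ → ℂ} (hF : Differentiable ℂ F) (hF0 : ∃ z, F z ≠ 0) {a : ℕ → ℂ}
    (ha : Function.Injective a) (hFa : ∀ k, F (a k) = 0) :
    LinearIndependent ℂ (fun n : ℕ => fseq F a (n + 2)) := by
  rw [linearIndependent_iff']
  intro s
  induction s using Finset.strongInduction with
  | _ s ih =>
  intro g hsum i hi
  have hs : s.Nonempty := ⟨i, hi⟩
  set m := s.max' hs with hm
  have hfun : ∀ z, ∑ j ∈ s, g j * fseq F a (j + 2) z = 0 := by
    intro z
    have := congrFun hsum z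
    simpa [Finset.sum_apply] using this
  set P : ℂ → ℂ := fun z => ∑ j ∈ s, g j * ∏ k ∈ Finset.Ico (j + 2) (m + 2), (z - a k)
    with hPdef
  have hFP : ∀ z, F z * P z = 0 := by
    intro z
    have h1 : ∀ j ∈ s, (∏ k ∈ Finset.range (m + 2), (z - a k)) * (g j * fseq F a (j + 2) z)
        = F z * (g j * ∏ k ∈ Finset.Ico (j + 2) (m + 2), (z - a k)) := by
      intro j hj
      have hjm : j + 2 ≤ m + 2 := by
        have := Finset.le_max' s j hj; omega
      have key := fseq_mul ha hFa (j + 2) z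
      rw [← Finset.prod_range_mul_prod_Ico _ hjm]
      calc ((∏ k ∈ Finset.range (j + 2), (z - a k)) * ∏ k ∈ Finset.Ico (j + 2) (m + 2), (z - a k))
            * (g j * fseq F a (j + 2) z)
          = g j * ((∏ k ∈ Finset.Ico (j + 2) (m + 2), (z - a k))
              * ((∏ k ∈ Finset.range (j + 2), (z - a k)) * fseq F a (j + 2) z)) := by ring
        _ = F z * (g j * ∏ k ∈ Finset.Ico (j + 2) (m + 2), (z - a k)) := by rw [key]; ring
    calc F z * P z = ∑ j ∈ s, F z * (g j * ∏ k ∈ Finset.Ico (j + 2) (m + 2), (z - a k)) := by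
          rw [hPdef, Finset.mul_sum]
      _ = ∑ j ∈ s, (∏ k ∈ Finset.range (m + 2), (z - a k)) * (g j * fseq F a (j + 2) z) :=
          (Finset.sum_congr rfl fun j hj => (h1 j hj).symm)
      _ = (∏ k ∈ Finset.range (m + 2), (z - a k)) * ∑ j ∈ s, g j * fseq F a (j + 2) z := by
          rw [Finset.mul_sum]
      _ = 0 := by rw [hfun z, mul_zero]
  have hPcont : Continuous P := by
    apply continuous_finset_sum
    intro j _
    exact continuous_const.mul (continuous_finset_prod _ fun k _ =>
      continuous_id.sub continuous_const)
  have hP0 : ∀ z, P z = 0 := by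
    have := Continuous.ext_on (Fdense hF hF0) hPcont continuous_const
      (fun z hz => by
        have := hFP z
        exact (mul_eq_zero.1 this).resolve_left hz)
    exact fun z => congrFun this z
  have hgm : g m = 0 := by
    have h := hP0 (a (m + 1))
    simp only [hPdef] at h
    rw [Finset.sum_eq_single m] at h
    · simpa using h
    · intro j hj hjm
      have hj2 : j < m := lt_of_le_of_ne (Finset.le_max' s j hj) hjm
      have : (m + 1) ∈ Finset.Ico (j + 2) (m + 2) := Finset.mem_Ico.2 ⟨by omega, by omega⟩
      rw [Finset.prod_eq_zero this (sub_self (a (m + 1))), mul_zero]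
    · intro h; exact absurd (s.max'_mem hs) h
  rcases eq_or_ne i m with rfl | him
  · exact hgm
  · refine ih (s.erase m) (Finset.erase_ssubset (s.max'_mem hs)) g ?_ i
      (Finset.mem_erase.2 ⟨him, hi⟩)
    rw [Finset.sum_erase _ (by rw [hgm, zero_smul])]
    exact hsum

lemma cont_w {F g : ℂ → ℂ} (hF : Continuous F) (hg : Continuous g) :
    Continuous fun z => ‖g z‖ ^ 2 / (1 + ‖F z‖ ^ 2) ^ 2 :=
  (hg.norm.pow 2).div ((continuous_const.add (hF.norm.pow 2)).pow 2)
    (fun z => by positivity)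

lemma fseq_int {F : ℂ → ℂ} (hF : Differentiable ℂ F) {a : ℕ → ℂ}
    (ha : Function.Injective a) (hFa : ∀ k, F (a k) = 0) (n : ℕ) :
    Integrable (fun z : ℂ => ‖fseq F a (n + 2) z‖ ^ 2 / (1 + ‖F z‖ ^ 2) ^ 2) := by
  set m := n + 2 with hmdef
  set q : ℂ → ℂ := fun z => ∏ k ∈ Finset.range m, (z - a k) with hqdef
  set w : ℂ → ℝ := fun z => ‖fseq F a m z‖ ^ 2 / (1 + ‖F z‖ ^ 2) ^ 2 with hwdef
  have hwcont : Continuous w := cont_w hF.continuous (fseq_diff hF a m).continuous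
  have hwnonneg : ∀ z, 0 ≤ w z := fun z => by positivity
  set R : ℝ := 1 + ∑ k ∈ Finset.range m, ‖a k‖ with hRdef
  have hR1 : 1 ≤ R := by
    have : 0 ≤ ∑ k ∈ Finset.range m, ‖a k‖ :=
      Finset.sum_nonneg fun k _ => norm_nonneg _
    linarith
  have haR : ∀ k ∈ Finset.range m, ‖a k‖ ≤ R := by
    intro k hk
    have := Finset.single_le_sum (f := fun k => ‖a k‖) (fun k _ => norm_nonneg _) hk
    linarith
  set R₀ : ℝ := 2 * R + 3 with hR₀def
  have hq : ∀ z : ℂ, R₀ ≤ ‖z‖ → (1 + ‖z‖) ^ 2 / 16 ≤ ‖q z‖ := by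
    intro z hz
    have h1 : ∀ k ∈ Finset.range m, (1 + ‖z‖) / 4 ≤ ‖z - a k‖ := by
      intro k hk
      have h2 := haR k hk
      have h3 := norm_sub_norm_le z (a k)
      have : R₀ ≤ ‖z‖ := hz
      rw [hR₀def] at this
      linarith
    have h5 : (1:ℝ) ≤ (1 + ‖z‖) / 4 := by
      have : R₀ ≤ ‖z‖ := hz
      rw [hR₀def] at this
      linarith
    calc (1 + ‖z‖) ^ 2 / 16 = ((1 + ‖z‖) / 4) ^ 2 := by ring
      _ ≤ ((1 + ‖z‖) / 4) ^ m := pow_le_pow_right₀ h5 (by omega)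
      _ = ∏ k ∈ Finset.range m, ((1 + ‖z‖) / 4) := by
          rw [Finset.prod_const, Finset.card_range]
      _ ≤ ∏ k ∈ Finset.range m, ‖z - a k‖ :=
          Finset.prod_le_prod (fun k _ => by positivity) h1
      _ = ‖q z‖ := (norm_prod _ _).symm
  obtain ⟨M, hM⟩ := (isCompact_closedBall (0:ℂ) R₀).exists_bound_of_continuousOn
    hwcont.continuousOn
  set C : ℝ := max 256 (M * (1 + R₀) ^ 4) with hCdef
  have hbound : ∀ z : ℂ, w z ≤ C / (1 + ‖z‖) ^ 4 := by
    intro z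
    have hpos4 : (0:ℝ) < (1 + ‖z‖) ^ 4 := by positivity
    rcases le_or_gt ‖z‖ R₀ with hz | hz
    · have hzb : z ∈ Metric.closedBall (0:ℂ) R₀ := by
        simpa [Metric.mem_closedBall, dist_eq_norm] using hz
      have h1 : w z ≤ M := le_trans (le_abs_self _) (hM z hzb)
      rw [le_div_iff₀ hpos4]
      calc w z * (1 + ‖z‖) ^ 4 ≤ M * (1 + R₀) ^ 4 := by
            have h4 : (1 + ‖z‖) ^ 4 ≤ (1 + R₀) ^ 4 :=
              pow_le_pow_left₀ (by positivity) (by linarith) 4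
            have hM0 : 0 ≤ M := le_trans (abs_nonneg _) (hM 0 (by
              simp [Metric.mem_closedBall]; linarith))
            exact mul_le_mul h1 h4 (le_of_lt hpos4) hM0
        _ ≤ C := le_max_right _ _
    · have hz' : R₀ ≤ ‖z‖ := le_of_lt hz
      have hqlb := hq z hz'
      have hqpos : (0:ℝ) < ‖q z‖ := lt_of_lt_of_le (by positivity) hqlb
      have hqne : q z ≠ 0 := norm_pos_iff.1 hqpos
      have hfm : fseq F a m z = F z / q z := by
        rw [eq_div_iff hqne, mul_comm]
        exact fseq_mul ha hFa m z
      have hFne : (1 + ‖F z‖ ^ 2) ^ 2 ≠ 0 := by positivity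
      have key : w z ≤ 256 / (1 + ‖z‖) ^ 4 := by
        calc w z = ‖F z‖ ^ 2 / (‖q z‖ ^ 2 * (1 + ‖F z‖ ^ 2) ^ 2) := by
              rw [hwdef]; simp only []
              rw [hfm, norm_div, div_pow, div_div]
          _ ≤ (1 + ‖F z‖ ^ 2) ^ 2 / (‖q z‖ ^ 2 * (1 + ‖F z‖ ^ 2) ^ 2) := by
              gcongr
              nlinarith [sq_nonneg (‖F z‖), sq_nonneg (‖F z‖ ^ 2)]
          _ = 1 / ‖q z‖ ^ 2 := by
              rw [mul_comm, div_mul_eq_div_div, div_self hFne]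
          _ ≤ 1 / ((1 + ‖z‖) ^ 2 / 16) ^ 2 := by
              apply one_div_le_one_div_of_le (by positivity)
              exact pow_le_pow_left₀ (by positivity) hqlb 2
          _ = 256 / (1 + ‖z‖) ^ 4 := by
              have h0 : (1:ℝ) + ‖z‖ ≠ 0 := by positivity
              field_simp
              ring
      calc w z ≤ 256 / (1 + ‖z‖) ^ 4 := key
        _ ≤ C / (1 + ‖z‖) ^ 4 := by gcongr; exact le_max_left _ _
  have hIdom : Integrable (fun z : ℂ => C / (1 + ‖z‖) ^ 4) := by
    have h1 : Integrable (fun z : ℂ => ((1:ℝ) + ‖z‖) ^ (-(4:ℝ))) :=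
      integrable_one_add_norm (by rw [Complex.finrank_real_complex]; norm_num)
    have h2 := h1.const_mul C
    refine h2.congr (Filter.Eventually.of_forall fun z => ?_)
    show C * ((1:ℝ) + ‖z‖) ^ (-(4:ℝ)) = C / (1 + ‖z‖) ^ 4
    rw [Real.rpow_neg (by positivity), show ((4:ℝ)) = ((4:ℕ):ℝ) by norm_num,
      Real.rpow_natCast, div_eq_mul_inv]
  exact hIdom.mono' hwcont.aestronglyMeasurable
    (Filter.Eventually.of_forall fun z => by
      rw [Real.norm_of_nonneg (hwnonneg z)]; exact hbound z)

lemma aux_notfd {F : ℂ → ℂ} (hF : Differentiable ℂ F) (hF0 : ∃ z, F z ≠ 0)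
    (hzeros : {z : ℂ | F z = 0}.Infinite) (E : Submodule ℂ (ℂ → ℂ))
    (hE : ∀ g, Differentiable ℂ g →
      Integrable (fun z : ℂ => ‖g z‖ ^ 2 / (1 + ‖F z‖ ^ 2) ^ 2) → g ∈ E) :
    ¬ FiniteDimensional ℂ E := by
  intro hfd
  haveI := hfd
  let e := Set.Infinite.natEmbedding _ hzeros
  set a : ℕ → ℂ := fun k => (e k : ℂ) with hadef
  have ha : Function.Injective a := fun i j h => e.injective (Subtype.coe_injective h)
  have hFa : ∀ k, F (a k) = 0 := fun k => (e k).2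
  let b : ℕ → E := fun k => ⟨fseq F a (k + 2),
    hE _ (fseq_diff hF a (k + 2)) (fseq_int hF ha hFa k)⟩
  have hb : LinearIndependent ℂ b :=
    LinearIndependent.of_comp E.subtype (fseq_indep hF hF0 ha hFa)
  exact Module.Finite.not_linearIndependent_of_infinite b hb

noncomputable def Emod (F : ℂ → ℂ) (hF : Differentiable ℂ F) : Submodule ℂ (ℂ → ℂ) :=
  { carrier := {g | Differentiable ℂ g ∧
      Integrable (fun z : ℂ => ‖g z‖ ^ 2 / (1 + ‖F z‖ ^ 2) ^ 2)},
    add_mem' := by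
      rintro g h ⟨hgd, hgi⟩ ⟨hhd, hhi⟩
      refine ⟨hgd.add hhd, ?_⟩
      refine ((hgi.add hhi).const_mul 2).mono'
        (cont_w hF.continuous (hgd.add hhd).continuous).aestronglyMeasurable
        (Filter.Eventually.of_forall fun z => ?_)
      rw [Real.norm_of_nonneg (by positivity)]
      have h1 : ‖g z + h z‖ ^ 2 ≤ 2 * ‖g z‖ ^ 2 + 2 * ‖h z‖ ^ 2 := by
        have h2 : ‖g z + h z‖ ^ 2 ≤ (‖g z‖ + ‖h z‖) ^ 2 :=
          pow_le_pow_left₀ (norm_nonneg _) (norm_add_le (g z) (h z)) 2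
        nlinarith [sq_nonneg (‖g z‖ - ‖h z‖)]
      calc ‖(g + h) z‖ ^ 2 / (1 + ‖F z‖ ^ 2) ^ 2
          = ‖g z + h z‖ ^ 2 / (1 + ‖F z‖ ^ 2) ^ 2 := by rw [Pi.add_apply]
        _ ≤ (2 * ‖g z‖ ^ 2 + 2 * ‖h z‖ ^ 2) / (1 + ‖F z‖ ^ 2) ^ 2 := by gcongr
        _ = 2 * (‖g z‖ ^ 2 / (1 + ‖F z‖ ^ 2) ^ 2 + ‖h z‖ ^ 2 / (1 + ‖F z‖ ^ 2) ^ 2) := by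
            ring,
    zero_mem' := by
      refine ⟨differentiable_const 0, ?_⟩
      have : (fun z : ℂ => ‖(0 : ℂ → ℂ) z‖ ^ 2 / (1 + ‖F z‖ ^ 2) ^ 2)
          = fun _ : ℂ => (0:ℝ) := by
        funext z; simp
      rw [this]
      exact integrable_zero _ _ _,
    smul_mem' := by
      rintro c g ⟨hgd, hgi⟩
      refine ⟨hgd.const_smul c, ?_⟩
      refine (hgi.const_mul (‖c‖ ^ 2)).congr (Filter.Eventually.of_forall fun z => ?_)
      show ‖c‖ ^ 2 * (‖g z‖ ^ 2 / (1 + ‖F z‖ ^ 2) ^ 2)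
          = ‖(c • g) z‖ ^ 2 / (1 + ‖F z‖ ^ 2) ^ 2
      rw [Pi.smul_apply, norm_smul, mul_pow, mul_div_assoc] }

/-- The key construction in the proof of Theorem 1.12 of the paper: if `F` is an entire
function on `ℂ`, not identically zero, whose zero set is infinite, then the set of entire
functions `g` with `∫_ℂ |g|² (1+|F|²)^{−2} dA < ∞` is a complex vector subspace of `ℂ → ℂ`
which is infinite-dimensional over `ℂ`. -/
theorem stmt_11 (F : ℂ → ℂ) (hF : Differentiable ℂ F)
    (hF0 : ∃ z, F z ≠ 0)
    (hzeros : {z : ℂ | F z = 0}.Infinite) :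
    ∃ E : Submodule ℂ (ℂ → ℂ),
      (E : Set (ℂ → ℂ)) = {g | Differentiable ℂ g ∧
        Integrable (fun z : ℂ => ‖g z‖ ^ 2 / (1 + ‖F z‖ ^ 2) ^ 2)} ∧
      ¬ FiniteDimensional ℂ E :=
  ⟨Emod F hF, rfl, aux_notfd hF hF0 hzeros _ (fun _g hd hi => ⟨hd, hi⟩)⟩
end

section
/- Define κ : ℝ → ℝ by κ(t) = 0 for t ≥ 0 and κ(t) = 1 + t − e^t for t < 0. Let N ≥ 1, let w ∈ ℂ^N, R > 0, and let a, b ∈ ℂ^N. Define u : ℂ → ℝ by u(τ) = κ( log( |a + τ·b − w|² / R² ) ). Then: (i) at every τ₀ ∈ ℂ with 0 < |a + τ₀·b − w| < R, the function u is C² near τ₀ and its Laplacian (with respect to ℂ ≅ ℝ²) satisfies Δu(τ₀) ≥ −4|b|²/R²; and (ii) u vanishes in a neighborhood of every τ₀ with |a + τ₀·b − w| > R, hence Δu(τ₀) = 0 there. -/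
/-!
Where `0 < ‖z‖ < R` (with `z = a + τ • b - w`), `u` agrees near `τ` with `1 + log s - s`,
`s = ‖a - w + τ • b‖² / R²`. The planar Laplacian is the sum of the second derivatives along the
real lines through `τ` in the directions `1` and `i`. Along such a line, `‖z + t • d‖²` is a real
quadratic polynomial in `t`, so both second derivatives can be computed explicitly. The `log`
terms add up to `4 (‖z‖² ‖b‖² - |⟪z, b⟫|²) / ‖z‖⁴ ≥ 0` (Cauchy–Schwarz). The `-s` term contributes
exactly `-4 ‖b‖² / R²`. Where `‖z‖ > R`, `κ ∘ log` vanishes on a neighbourhood.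
-/

open Filter Topology

noncomputable def kappaBO (t : ℝ) : ℝ := if 0 ≤ t then 0 else 1 + t - Real.exp t

noncomputable def planarLaplacian (u : ℂ → ℝ) (τ : ℂ) : ℝ :=
  iteratedFDeriv ℝ 2 u τ ![1, 1] + iteratedFDeriv ℝ 2 u τ ![Complex.I, Complex.I]

section SecondDerivatives

variable {𝕜 E F : Type*} [NontriviallyNormedField 𝕜] [NormedAddCommGroup E] [NormedSpace 𝕜 E]
  [NormedAddCommGroup F] [NormedSpace 𝕜 F]

theorem ContDiffAt.iteratedFDeriv_two_apply_self {f : E → F} {x : E} (hf : ContDiffAt 𝕜 2 f x)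
    (v : E) : iteratedFDeriv 𝕜 2 f x ![v, v] = iteratedDeriv 2 (fun t : 𝕜 => f (x + t • v)) 0 := by
  have hline : ∀ t : 𝕜, HasDerivAt (fun t : 𝕜 => x + t • v) v t := fun t => by
    simpa using ((hasDerivAt_id t).smul_const v).const_add x
  have hdiff : ∀ᶠ t in 𝓝 (0 : 𝕜), DifferentiableAt 𝕜 f (x + t • v) := by
    have hcont : Tendsto (fun t : 𝕜 => x + t • v) (𝓝 0) (𝓝 x) := by
      simpa using (hline 0).continuousAt.tendsto
    exact hcont.eventually ((hf.eventually (by simp)).mono fun y hy =>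
      hy.differentiableAt (by norm_num))
  have hfirst : deriv (fun t : 𝕜 => f (x + t • v)) =ᶠ[𝓝 0] fun t => fderiv 𝕜 f (x + t • v) v :=
    hdiff.mono fun t ht => (ht.hasFDerivAt.comp_hasDerivAt t (hline t)).deriv
  have hsecond : HasDerivAt (fun t : 𝕜 => fderiv 𝕜 f (x + t • v) v)
      (fderiv 𝕜 (fderiv 𝕜 f) x v v) 0 := by
    have hf' : DifferentiableAt 𝕜 (fderiv 𝕜 f) x :=
      (hf.fderiv_right (m := 1) (by norm_num)).differentiableAt one_ne_zero
    exact (ContinuousLinearMap.apply 𝕜 F v).hasFDerivAt.comp_hasDerivAt 0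
      (hf'.hasFDerivAt.comp_hasDerivAt_of_eq 0 (hline 0) (by simp))
  rw [iteratedFDeriv_two_apply, iteratedDeriv_succ, iteratedDeriv_one, hfirst.deriv_eq,
    hsecond.deriv]
  simp

theorem iteratedDeriv_two_comp {ψ ψ' p p' : 𝕜 → 𝕜} {ψ'' p'' t₀ : 𝕜}
    (hψ : ∀ᶠ s in 𝓝 (p t₀), HasDerivAt ψ (ψ' s) s) (hψ' : HasDerivAt ψ' ψ'' (p t₀))
    (hp : ∀ᶠ t in 𝓝 t₀, HasDerivAt p (p' t) t) (hp' : HasDerivAt p' p'' t₀) :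
    iteratedDeriv 2 (ψ ∘ p) t₀ = ψ'' * p' t₀ ^ 2 + ψ' (p t₀) * p'' := by
  have hpt₀ : HasDerivAt p (p' t₀) t₀ := hp.self_of_nhds
  have hfirst : deriv (ψ ∘ p) =ᶠ[𝓝 t₀] fun t => ψ' (p t) * p' t := by
    filter_upwards [hp, hpt₀.continuousAt.tendsto.eventually hψ] with t hpt hψt
    exact (hψt.comp t hpt).deriv
  have hsecond : HasDerivAt (fun t => ψ' (p t) * p' t) (ψ'' * p' t₀ * p' t₀ + ψ' (p t₀) * p'')
      t₀ := (hψ'.comp t₀ hpt₀).mul hp'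
  rw [iteratedDeriv_succ, iteratedDeriv_one, hfirst.deriv_eq, hsecond.deriv]
  ring

end SecondDerivatives

noncomputable def kappaLogBranch (x : ℝ) : ℝ := 1 + Real.log x - x

theorem kappaBO_log_of_lt_one {x : ℝ} (h0 : 0 < x) (h1 : x < 1) :
    kappaBO (Real.log x) = kappaLogBranch x := by
  rw [kappaBO, if_neg (Real.log_neg h0 h1).not_ge, Real.exp_log h0, kappaLogBranch]

theorem kappaBO_log_of_one_le {x : ℝ} (h : 1 ≤ x) : kappaBO (Real.log x) = 0 :=
  if_pos (Real.log_nonneg h)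

section Eventually

variable {X : Type*} [TopologicalSpace X] {f : X → ℝ} {x : X}

theorem ContinuousAt.kappaBO_log_eventuallyEq_kappaLogBranch (hf : ContinuousAt f x)
    (h0 : 0 < f x) (h1 : f x < 1) :
    (fun y => kappaBO (Real.log (f y))) =ᶠ[𝓝 x] fun y => kappaLogBranch (f y) :=
  (hf.eventually (isOpen_Ioo.mem_nhds ⟨h0, h1⟩)).mono fun _ hy =>
    kappaBO_log_of_lt_one hy.1 hy.2

theorem ContinuousAt.kappaBO_log_eventuallyEq_zero (hf : ContinuousAt f x) (h : 1 < f x) :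
    (fun y => kappaBO (Real.log (f y))) =ᶠ[𝓝 x] fun _ => 0 :=
  (hf.eventually (lt_mem_nhds h)).mono fun _ hy => kappaBO_log_of_one_le hy.le

end Eventually

theorem hasDerivAt_kappaLogBranch {x : ℝ} (hx : x ≠ 0) :
    HasDerivAt kappaLogBranch (x⁻¹ - 1) x :=
  ((Real.hasDerivAt_log hx).const_add 1).sub (hasDerivAt_id x)

theorem ContDiffAt.kappaLogBranch {E : Type*} [NormedAddCommGroup E] [NormedSpace ℝ E]
    {f : E → ℝ} {x : E} {n : WithTop ℕ∞} (hf : ContDiffAt ℝ n f x) (hx : f x ≠ 0) :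
    ContDiffAt ℝ n (fun y => kappaLogBranch (f y)) x :=
  (contDiffAt_const.add (hf.log hx)).sub hf

section InnerProductSpace

variable {𝕜 E : Type*} [RCLike 𝕜] [NormedAddCommGroup E] [InnerProductSpace 𝕜 E]
  [NormedSpace ℝ E] [IsScalarTower ℝ 𝕜 E]

variable (𝕜) in
theorem norm_add_real_smul_sq (z d : E) (t : ℝ) :
    ‖z + t • d‖ ^ 2 = ‖z‖ ^ 2 + 2 * RCLike.re (inner 𝕜 z d) * t + ‖d‖ ^ 2 * t ^ 2 := by
  rw [RCLike.real_smul_eq_coe_smul (K := 𝕜), norm_add_sq (𝕜 := 𝕜), inner_smul_right,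
    RCLike.re_ofReal_mul, norm_smul, RCLike.norm_ofReal, mul_pow, sq_abs]
  ring

theorem iteratedDeriv_two_kappaLogBranch_normSq_div_line {z : E} (hz : z ≠ 0) (d : E) {c : ℝ}
    (hc : c ≠ 0) :
    iteratedDeriv 2 (fun t : ℝ => kappaLogBranch (‖z + t • d‖ ^ 2 / c)) 0 =
      2 * ‖d‖ ^ 2 * ((‖z‖ ^ 2)⁻¹ - c⁻¹) - 4 * RCLike.re (inner 𝕜 z d) ^ 2 / ‖z‖ ^ 4 := by
  set β := RCLike.re (inner 𝕜 z d)
  set p : ℝ → ℝ := fun t => (‖z‖ ^ 2 + 2 * β * t + ‖d‖ ^ 2 * t ^ 2) / c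
  have hp0 : p 0 ≠ 0 := by simp [p, hz, hc]
  have hψ : ∀ᶠ s in 𝓝 (p 0), HasDerivAt kappaLogBranch (s⁻¹ - 1) s :=
    (eventually_ne_nhds hp0).mono fun s hs => hasDerivAt_kappaLogBranch hs
  have hp : ∀ t : ℝ, HasDerivAt p ((2 * β + 2 * ‖d‖ ^ 2 * t) / c) t := fun t => by
    refine (((((hasDerivAt_id t).const_mul (2 * β)).const_add (‖z‖ ^ 2)).add
      ((hasDerivAt_pow 2 t).const_mul (‖d‖ ^ 2))).div_const c).congr_deriv ?_
    simp only [mul_one, Nat.cast_ofNat, Nat.add_one_sub_one, pow_one]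
    ring
  have hp' : HasDerivAt (fun t : ℝ => (2 * β + 2 * ‖d‖ ^ 2 * t) / c) (2 * ‖d‖ ^ 2 / c) 0 := by
    simpa using (((hasDerivAt_id (0 : ℝ)).const_mul (2 * ‖d‖ ^ 2)).const_add (2 * β)).div_const c
  have hline : (fun t : ℝ => kappaLogBranch (‖z + t • d‖ ^ 2 / c)) = kappaLogBranch ∘ p := by
    ext t
    simp only [Function.comp_apply, norm_add_real_smul_sq 𝕜 z d, p, β]
  rw [hline, iteratedDeriv_two_comp hψ ((hasDerivAt_inv hp0).sub_const 1)
    (Eventually.of_forall hp) hp']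
  simp only [p]
  field_simp
  ring

end InnerProductSpace

theorem re_inner_sq_add_re_inner_I_smul_sq_le {E : Type*} [NormedAddCommGroup E]
    [InnerProductSpace ℂ E] (z b : E) :
    (inner ℂ z b).re ^ 2 + (inner ℂ z (Complex.I • b)).re ^ 2 ≤ ‖z‖ ^ 2 * ‖b‖ ^ 2 := by
  have hcs := pow_le_pow_left₀ (norm_nonneg _) (norm_inner_le_norm (𝕜 := ℂ) z b) 2
  rw [mul_pow, Complex.sq_norm, Complex.normSq_apply] at hcs
  rw [inner_smul_right, Complex.mul_re, Complex.I_re, Complex.I_im]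
  linarith

theorem planarLaplacian_congr_nhds {u₁ u₂ : ℂ → ℝ} {τ : ℂ} (h : u₁ =ᶠ[𝓝 τ] u₂) :
    planarLaplacian u₁ τ = planarLaplacian u₂ τ := by
  simp only [planarLaplacian, (h.iteratedFDeriv ℝ 2).eq_of_nhds]

theorem planarLaplacian_eq_iteratedDeriv_lines {u : ℂ → ℝ} {τ : ℂ} (hu : ContDiffAt ℝ 2 u τ) :
    planarLaplacian u τ = iteratedDeriv 2 (fun t : ℝ => u (τ + t • (1 : ℂ))) 0 +
      iteratedDeriv 2 (fun t : ℝ => u (τ + t • Complex.I)) 0 := by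
  rw [planarLaplacian, hu.iteratedFDeriv_two_apply_self, hu.iteratedFDeriv_two_apply_self]

section ComplexLine

variable {E : Type*} [NormedAddCommGroup E] [InnerProductSpace ℂ E] {p q : E} {c : ℝ} {τ₀ : ℂ}

theorem contDiffAt_kappaLogBranch_normSq_div (hτ₀ : p + τ₀ • q ≠ 0) (hc : c ≠ 0) :
    ContDiffAt ℝ 2 (fun τ : ℂ => kappaLogBranch (‖p + τ • q‖ ^ 2 / c)) τ₀ := by
  have hline : ContDiff ℝ 2 fun τ : ℂ => p + τ • q := by fun_prop
  exact ((hline.norm_sq ℂ).div_const c).contDiffAt.kappaLogBranch (by positivity)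

theorem neg_le_planarLaplacian_kappaLogBranch_normSq_div (hτ₀ : p + τ₀ • q ≠ 0) (hc : 0 < c) :
    -(4 * ‖q‖ ^ 2 / c) ≤
      planarLaplacian (fun τ : ℂ => kappaLogBranch (‖p + τ • q‖ ^ 2 / c)) τ₀ := by
  have hline : ∀ v : ℂ, (fun t : ℝ => kappaLogBranch (‖p + (τ₀ + t • v) • q‖ ^ 2 / c)) =
      fun t : ℝ => kappaLogBranch (‖(p + τ₀ • q) + t • (v • q)‖ ^ 2 / c) := by
    intro v
    simp only [add_smul, smul_assoc, add_assoc]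
  rw [planarLaplacian_eq_iteratedDeriv_lines (contDiffAt_kappaLogBranch_normSq_div hτ₀ hc.ne'),
    hline, hline, iteratedDeriv_two_kappaLogBranch_normSq_div_line (𝕜 := ℂ) hτ₀ _ hc.ne',
    iteratedDeriv_two_kappaLogBranch_normSq_div_line (𝕜 := ℂ) hτ₀ _ hc.ne']
  have hCS := re_inner_sq_add_re_inner_I_smul_sq_le (p + τ₀ • q) q
  have hz : 0 < ‖p + τ₀ • q‖ := norm_pos_iff.mpr hτ₀
  simp only [one_smul, norm_smul, Complex.norm_I, one_mul, RCLike.re_to_complex]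
  field_simp
  linarith [mul_le_mul_of_nonneg_left hCS hc.le]

end ComplexLine

theorem stmt_15_general {N : ℕ}
    (w a b : EuclideanSpace ℂ (Fin N)) (R : ℝ) (hR : 0 < R)
    (u : ℂ → ℝ)
    (hu : ∀ τ : ℂ, u τ = kappaBO (Real.log (‖a + τ • b - w‖ ^ 2 / R ^ 2))) :
    (∀ τ₀ : ℂ, 0 < ‖a + τ₀ • b - w‖ → ‖a + τ₀ • b - w‖ < R →
      ContDiffAt ℝ 2 u τ₀ ∧ -(4 * ‖b‖ ^ 2 / R ^ 2) ≤ planarLaplacian u τ₀) ∧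
    (∀ τ₀ : ℂ, R < ‖a + τ₀ • b - w‖ →
      (∀ᶠ τ in nhds τ₀, u τ = 0) ∧ planarLaplacian u τ₀ = 0) := by
  simp only [add_sub_right_comm a _ w] at hu ⊢
  obtain rfl : u = fun τ => kappaBO (Real.log (‖a - w + τ • b‖ ^ 2 / R ^ 2)) := funext hu
  have hcont : Continuous fun τ : ℂ => ‖a - w + τ • b‖ ^ 2 / R ^ 2 := by fun_prop
  refine ⟨fun τ₀ h0 hlt => ?_, fun τ₀ hgt => ?_⟩
  · have hsq : ‖a - w + τ₀ • b‖ ^ 2 < R ^ 2 := pow_lt_pow_left₀ hlt h0.le two_ne_zero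
    have hu_eq := hcont.continuousAt.kappaBO_log_eventuallyEq_kappaLogBranch (x := τ₀)
      (by positivity) ((div_lt_one (by positivity)).2 hsq)
    have hz : a - w + τ₀ • b ≠ 0 := norm_pos_iff.mp h0
    refine ⟨(contDiffAt_kappaLogBranch_normSq_div hz (by positivity)).congr_of_eventuallyEq hu_eq,
      ?_⟩
    rw [planarLaplacian_congr_nhds hu_eq]
    exact neg_le_planarLaplacian_kappaLogBranch_normSq_div hz (by positivity)
  · have hsq : R ^ 2 < ‖a - w + τ₀ • b‖ ^ 2 := pow_lt_pow_left₀ hgt hR.le two_ne_zero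
    have hu_eq := hcont.continuousAt.kappaBO_log_eventuallyEq_zero (x := τ₀)
      ((one_lt_div (by positivity)).2 hsq)
    refine ⟨hu_eq, ?_⟩
    rw [planarLaplacian_congr_nhds hu_eq]
    simp [planarLaplacian]

/-- Lemma 8.2 of the paper, tested along complex lines: for `w, a, b ∈ ℂ^N`, `R > 0`, and
`u(τ) = κ(log(|a + τb − w|²/R²))`, one has: (i) at every `τ₀` with
`0 < |a + τ₀b − w| < R`, `u` is `C²` near `τ₀` and `Δu(τ₀) ≥ −4|b|²/R²`; (ii) `u` vanishes
near every `τ₀` with `|a + τ₀b − w| > R`, and `Δu(τ₀) = 0` there. -/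
theorem stmt_15 {N : ℕ} (hN : 1 ≤ N)
    (w a b : EuclideanSpace ℂ (Fin N)) (R : ℝ) (hR : 0 < R)
    (u : ℂ → ℝ)
    (hu : ∀ τ : ℂ, u τ = kappaBO (Real.log (‖a + τ • b - w‖ ^ 2 / R ^ 2))) :
    (∀ τ₀ : ℂ, 0 < ‖a + τ₀ • b - w‖ → ‖a + τ₀ • b - w‖ < R →
      ContDiffAt ℝ 2 u τ₀ ∧ -(4 * ‖b‖ ^ 2 / R ^ 2) ≤ planarLaplacian u τ₀) ∧
    (∀ τ₀ : ℂ, R < ‖a + τ₀ • b - w‖ →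
      (∀ᶠ τ in nhds τ₀, u τ = 0) ∧ planarLaplacian u τ₀ = 0) :=
  stmt_15_general w a b R hR u hu
end
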